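/- arXiv:1505.00222 — 6 statements merged into one kernel-verified Lean document; each statement's English description precedes it below -/
import Mathlib

section
/- Let p, q, k be positive integers with k ≥ pq, and let P_k = ℂ[z_{βi} : 1 ≤ β ≤ p+q, 1 ≤ i ≤ k] be the polynomial ring in (p+q)k variables. For 1 ≤ α ≤ p and p+1 ≤ μ ≤ p+q define the quadratic polynomial q_{αμ} = Σ_{i=1}^k z_{αi} z_{μi}. Then the pq polynomials q_{αμ}, listed in any fixed order, form a regular sequence in P_k. -/
open MvPolynomial

/-- The quadratic polynomial `q_{αμ} = Σ_{i=1}^k z_{αi} z_{μi}` in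
`P_k = ℂ[z_{βi} : 1 ≤ β ≤ p+q, 1 ≤ i ≤ k]`, where `α` ranges over the first `p` row
indices and `μ` over the last `q` row indices. -/
noncomputable def qPoly (p q k : ℕ) (α : Fin p) (μ : Fin q) :
    MvPolynomial (Fin (p + q) × Fin k) ℂ :=
  ∑ i : Fin k, X (Fin.castAdd q α, i) * X (Fin.natAdd p μ, i)

/-!
Choose an injection `c` of the index pairs `(α, μ)` into `Fin k` (this is where `pq ≤ k` is
used) and call `z_{α,c(α,μ)}` and `z_{μ,c(α,μ)}` special. For the weight counting special
variables, the leading form of `q_{αμ}` is the monomial `z_{α,c(α,μ)} z_{μ,c(α,μ)}`; these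
monomials have pairwise disjoint supports, so each is a nonzerodivisor modulo the ideal of any
finite set of the others. To pass this to the `q`'s, multiply each non-special variable by a
new variable `T`: this turns `q_s` into `F_s ∈ P_k[T]` with `F_s(0)` the monomial and
`F_s(1) = q_s`. Syzygies of the monomials lift to syzygies of the `F_s` up to a multiple of
`T`, so `T` is a nonzerodivisor modulo `(F_s)_{s ∈ S}`; a descending induction on the weight
then shows the same for `F_{s₀}`, `s₀ ∉ S`, and setting `T = 1` gives it for `q_{s₀}`. As `S`
is arbitrary, every ordering of the `q`'s is a regular sequence.
-/

open RingTheory.Sequence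
open scoped Polynomial

section RegularModOthers

variable {R ι : Type*} [CommRing R]

def IsRegularModOthers (f : ι → R) : Prop :=
  ∀ (S : Finset ι) (s : ι), s ∉ S → ∀ g, f s * g ∈ Ideal.span (f '' S) →
    g ∈ Ideal.span (f '' S)

lemma mem_span_image_of_mem (f : ι → R) {S : Finset ι} {s : ι}
    (hs : s ∈ S) : f s ∈ Ideal.span (f '' S) :=
  Ideal.subset_span (Set.mem_image_of_mem f hs)

lemma isSMulRegular_quotient_smul_top {I : Ideal R} {r : R} (h : ∀ g, r * g ∈ I → g ∈ I) :
    IsSMulRegular (R ⧸ (I • ⊤ : Submodule R R)) r := by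
  rw [smul_eq_mul, Ideal.mul_top]
  refine IsSMulRegular.of_right_eq_zero_of_smul fun x hx => ?_
  obtain ⟨g, rfl⟩ := Submodule.Quotient.mk_surjective _ x
  rw [← Submodule.Quotient.mk_smul, Submodule.Quotient.mk_eq_zero] at hx
  rw [Submodule.Quotient.mk_eq_zero]
  exact h g hx

theorem IsRegularModOthers.isWeaklyRegular_map {f : ι → R} (hf : IsRegularModOthers f)
    {L : List ι} (hL : L.Nodup) : IsWeaklyRegular R (L.map f) := by
  classical
  refine ⟨fun i hi => isSMulRegular_quotient_smul_top fun g hg => ?_⟩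
  rw [List.length_map] at hi
  have hnot : L[i] ∉ (L.take i).toFinset := by
    rw [List.mem_toFinset]
    exact fun h => List.disjoint_take_drop hL le_rfl h
      (List.mem_drop_iff_getElem.mpr ⟨0, by omega, by simp⟩)
  have hspan : Ideal.ofList ((L.map f).take i) = Ideal.span (f '' (L.take i).toFinset) := by
    simp [Ideal.ofList, ← List.map_take, Set.image]
  rw [hspan] at hg ⊢
  rw [List.getElem_map] at hg
  exact hf _ _ hnot g hg

theorem IsRegularModOthers.isRegular_map {f : ι → R} (hf : IsRegularModOthers f)
    {L : List ι} (hL : L.Nodup) (hne : Ideal.span (Set.range f) ≠ ⊤) :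
    IsRegular R (L.map f) := by
  refine ⟨hf.isWeaklyRegular_map hL, fun h => hne (top_unique ?_)⟩
  rw [smul_eq_mul, Ideal.mul_top] at h
  rw [h, Ideal.ofList]
  exact Ideal.span_mono (by simp [Set.range])

end RegularModOthers

section DisjointMonomials

variable {σ ι R : Type*} [CommRing R] {e : ι → σ →₀ ℕ}

lemma Finsupp.le_of_le_add_of_disjoint {a b d : σ →₀ ℕ} (h : Disjoint a.support b.support)
    (hle : a ≤ b + d) : a ≤ d := by
  intro v
  by_cases hv : a v = 0
  · simp [hv]
  · have hb : b v = 0 := Finsupp.notMem_support_iff.mp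
      (Finset.disjoint_left.mp h (Finsupp.mem_support_iff.mpr hv))
    simpa [hb] using hle v

lemma span_monomial_image_eq (S : Set ι) :
    Ideal.span ((fun s => monomial (e s) (1 : R)) '' S) =
      Ideal.span ((fun d => monomial d (1 : R)) '' (e '' S)) := by
  rw [Set.image_image]

theorem isRegularModOthers_monomial
    (he : Pairwise fun s t => Disjoint (e s).support (e t).support) :
    IsRegularModOthers (fun s => monomial (e s) (1 : R)) := by
  intro S s₀ hs₀ g hg
  rw [span_monomial_image_eq, mem_ideal_span_monomial_image] at hg ⊢
  intro d hd
  have hmem : e s₀ + d ∈ (monomial (e s₀) 1 * g).support := by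
    rwa [mem_support_iff, coeff_monomial_mul, one_mul, ← mem_support_iff]
  obtain ⟨_, ⟨s, hs, rfl⟩, hle⟩ := hg _ hmem
  exact ⟨e s, ⟨s, hs, rfl⟩,
    Finsupp.le_of_le_add_of_disjoint (he (ne_of_mem_of_not_mem hs hs₀)) hle⟩

theorem exists_eq_sum_mul_monomial_of_mem_span {S : Finset ι} {x : MvPolynomial σ R}
    (hx : x ∈ Ideal.span ((fun s => monomial (e s) (1 : R)) '' S)) :
    ∃ b : ι → MvPolynomial σ R, x = ∑ s ∈ S, b s * monomial (e s) 1 ∧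
      ∀ s, ∀ d ∈ (b s).support, d + e s ∈ x.support := by
  classical
  rw [span_monomial_image_eq, mem_ideal_span_monomial_image] at hx
  have hdiv : ∀ d : x.support, ∃ s ∈ S, e s ≤ d := fun d => by
    obtain ⟨_, ⟨s, hs, rfl⟩, hle⟩ := hx d d.2
    exact ⟨s, hs, hle⟩
  choose sel hselS hsel using hdiv
  refine ⟨fun s => ∑ d ∈ x.support.attach with sel d = s,
    monomial ((d : σ →₀ ℕ) - e s) (coeff d x), ?_, ?_⟩
  · have hfiber : ∀ s ∈ S, (∑ d ∈ x.support.attach with sel d = s,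
        monomial ((d : σ →₀ ℕ) - e s) (coeff d x)) * monomial (e s) 1 =
          ∑ d ∈ x.support.attach with sel d = s, monomial (d : σ →₀ ℕ) (coeff d x) := by
      intro s _
      rw [Finset.sum_mul]
      refine Finset.sum_congr rfl fun d hd => ?_
      rw [monomial_mul, mul_one, tsub_add_cancel_of_le ((Finset.mem_filter.mp hd).2 ▸ hsel d)]
    rw [Finset.sum_congr rfl hfiber, Finset.sum_fiberwise_of_maps_to (fun d _ => hselS d),
      Finset.sum_attach x.support fun d => monomial d (coeff d x), support_sum_monomial_coeff]
  · intro s d hd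
    obtain ⟨d', hd', hdd'⟩ := Finset.mem_biUnion.mp (support_sum hd)
    rw [Finset.mem_singleton.mp (support_monomial_subset hdd'),
      tsub_add_cancel_of_le ((Finset.mem_filter.mp hd').2 ▸ hsel d')]
    exact d'.2

end DisjointMonomials

section Deformation

variable {A ι : Type*} [CommRing A] {F : ι → A[X]}

theorem exists_sum_C_mul_eq_X_mul (hF : IsRegularModOthers fun s => (F s).coeff 0)
    (S : Finset ι) (b : ι → A) (hb : ∑ s ∈ S, b s * (F s).coeff 0 = 0) :
    ∃ h ∈ Ideal.span (F '' S), ∑ s ∈ S, Polynomial.C (b s) * F s = Polynomial.X * h := by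
  classical
  induction S using Finset.induction_on generalizing b with
  | empty => exact ⟨0, zero_mem _, by simp⟩
  | @insert s₀ S hs₀ IH =>
    set m := fun s => (F s).coeff 0
    set D := fun s => (F s).divX
    rw [Finset.sum_insert hs₀] at hb ⊢
    have hb₀ : b s₀ ∈ Ideal.span (m '' S) := by
      refine hF S s₀ hs₀ _ ?_
      rw [show m s₀ * b s₀ = -∑ s ∈ S, b s * m s by linear_combination hb]
      exact neg_mem (sum_mem fun s hs => Ideal.mul_mem_left _ _ (mem_span_image_of_mem m hs))
    obtain ⟨c, hc⟩ := (Submodule.mem_span_image_finset_iff_exists_fun' A).mp hb₀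
    simp only [smul_eq_mul] at hc
    have hsyz : ∑ s ∈ S, (b s + c s * m s₀) * m s = 0 := by
      calc ∑ s ∈ S, (b s + c s * m s₀) * m s
          = ∑ s ∈ S, b s * m s + (∑ s ∈ S, c s * m s) * m s₀ := by
            rw [Finset.sum_mul, ← Finset.sum_add_distrib]
            exact Finset.sum_congr rfl fun s _ => by ring
        _ = 0 := by rw [hc]; linear_combination hb
    obtain ⟨h, hh, hX⟩ := IH _ hsyz
    have hFsplit : ∀ s, Polynomial.X * D s + Polynomial.C (m s) = F s :=
      fun s => Polynomial.X_mul_divX_add (F s)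
    have hmem : ∀ s ∈ insert s₀ S, F s ∈ Ideal.span (F '' ↑(insert s₀ S)) :=
      fun s hs => mem_span_image_of_mem F hs
    refine ⟨h + ∑ s ∈ S, Polynomial.C (c s) * (D s₀ * F s - D s * F s₀),
      add_mem (Ideal.span_mono (Set.image_mono (by simp)) hh) (sum_mem fun s hs =>
        Ideal.mul_mem_left _ _ (sub_mem
          (Ideal.mul_mem_left _ _ (hmem s (Finset.mem_insert_of_mem hs)))
          (Ideal.mul_mem_left _ _ (hmem s₀ (Finset.mem_insert_self s₀ S))))), ?_⟩
    rw [mul_add, ← hX, ← hc, map_sum, Finset.sum_mul, Finset.mul_sum,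
      ← Finset.sum_add_distrib, ← Finset.sum_add_distrib]
    refine Finset.sum_congr rfl fun s _ => ?_
    simp only [map_add, map_mul]
    -- Koszul: `C (m s) * F s₀ - C (m s₀) * F s = X * (D s₀ * F s - D s * F s₀)`
    linear_combination Polynomial.C (c s) * F s₀ * hFsplit s -
      Polynomial.C (c s) * F s * hFsplit s₀

theorem mem_span_of_X_mul_mem_span (hF : IsRegularModOthers fun s => (F s).coeff 0)
    {S : Finset ι} {g : A[X]} (hg : Polynomial.X * g ∈ Ideal.span (F '' S)) :
    g ∈ Ideal.span (F '' S) := by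
  obtain ⟨a, ha⟩ := (Submodule.mem_span_image_finset_iff_exists_fun' A[X]).mp hg
  simp only [smul_eq_mul] at ha
  have hsyz : ∑ s ∈ S, (a s).coeff 0 * (F s).coeff 0 = 0 := by
    simpa [Polynomial.finsetSum_coeff, Polynomial.mul_coeff_zero] using
      congrArg (Polynomial.coeff · 0) ha
  obtain ⟨h, hh, hX⟩ := exists_sum_C_mul_eq_X_mul hF S _ hsyz
  have hg' : g = h + ∑ s ∈ S, (a s).divX * F s := by
    refine Polynomial.isRegular_X.left ?_
    beta_reduce
    rw [mul_add, ← hX, Finset.mul_sum, ← Finset.sum_add_distrib, ← ha]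
    refine Finset.sum_congr rfl fun s _ => ?_
    linear_combination (F s) * (Polynomial.X_mul_divX_add (a s)).symm
  rw [hg']
  exact add_mem hh (sum_mem fun s hs => Ideal.mul_mem_left _ _ (mem_span_image_of_mem F hs))

lemma coeff_zero_mem_span {S : Finset ι} {x : A[X]} (hx : x ∈ Ideal.span (F '' S)) :
    x.coeff 0 ∈ Ideal.span ((fun s => (F s).coeff 0) '' S) := by
  have := Ideal.mem_map_of_mem Polynomial.constantCoeff hx
  rwa [Ideal.map_span, Set.image_image] at this

lemma eq_sum_C_mul_add_X_mul {S : Finset ι} {g : A[X]} {b : ι → A}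
    (hb : g.coeff 0 = ∑ s ∈ S, b s * (F s).coeff 0) :
    g = ∑ s ∈ S, Polynomial.C (b s) * F s +
      Polynomial.X * (g.divX - ∑ s ∈ S, Polynomial.C (b s) * (F s).divX) := by
  have hFs : ∀ s, Polynomial.C ((F s).coeff 0) = F s - Polynomial.X * (F s).divX := fun s => by
    linear_combination Polynomial.X_mul_divX_add (F s)
  conv_lhs => rw [← Polynomial.X_mul_divX_add g, hb, map_sum]
  simp only [map_mul, hFs, mul_sub, Finset.mul_sum, Finset.sum_sub_distrib,
    mul_left_comm _ Polynomial.X]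
  ring

end Deformation

section LowWeight

variable {σ R : Type*} [CommRing R] (w : σ → ℕ)

variable (R) in
def weightLT (N : ℕ) : Submodule R (MvPolynomial σ R)[X] where
  carrier := {g | ∀ i, ∀ d ∈ (g.coeff i).support, i + Finsupp.weight w d < N}
  add_mem' {f g} hf hg i d hd := by
    classical
    rw [Polynomial.coeff_add] at hd
    rcases Finset.mem_union.mp (support_add hd) with h | h
    exacts [hf i d h, hg i d h]
  zero_mem' i d hd := by simp at hd
  smul_mem' r g hg i d hd := by
    rw [Polynomial.coeff_smul] at hd
    exact hg i d (support_smul hd)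

def IsTotalWeightHomogeneous (n : ℕ) (F : (MvPolynomial σ R)[X]) : Prop :=
  ∀ i, ∀ d ∈ (F.coeff i).support, i + Finsupp.weight w d = n

variable {w}

lemma mem_weightLT {N : ℕ} {g : (MvPolynomial σ R)[X]} :
    g ∈ weightLT R w N ↔ ∀ i, ∀ d ∈ (g.coeff i).support, i + Finsupp.weight w d < N :=
  Iff.rfl

lemma eq_zero_of_mem_weightLT_zero {g : (MvPolynomial σ R)[X]} (hg : g ∈ weightLT R w 0) :
    g = 0 :=
  Polynomial.ext fun i => support_eq_empty.mp <|
    Finset.eq_empty_of_forall_notMem fun d hd => Nat.not_lt_zero _ (mem_weightLT.mp hg i d hd)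

variable (w) in
lemma exists_mem_weightLT (g : (MvPolynomial σ R)[X]) : ∃ N, g ∈ weightLT R w N := by
  refine ⟨g.support.sup (fun i => (g.coeff i).support.sup fun d => i + Finsupp.weight w d) + 1,
    mem_weightLT.mpr fun i d hd => Nat.lt_succ_of_le ?_⟩
  have hi : i ∈ g.support := Polynomial.mem_support_iff.mpr fun h => by simp [h] at hd
  exact le_trans (Finset.le_sup (f := fun d => i + Finsupp.weight w d) hd)
    (Finset.le_sup (f := fun i => (g.coeff i).support.sup fun d => i + Finsupp.weight w d) hi)

lemma divX_mem_weightLT {N : ℕ} {g : (MvPolynomial σ R)[X]} (hg : g ∈ weightLT R w (N + 1)) :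
    g.divX ∈ weightLT R w N := mem_weightLT.mpr fun i d hd => by
  rw [Polynomial.coeff_divX] at hd
  have := mem_weightLT.mp hg (i + 1) d hd
  omega

lemma C_mul_divX_mem_weightLT {N n : ℕ} {F : (MvPolynomial σ R)[X]}
    (hF : IsTotalWeightHomogeneous w n F) {b : MvPolynomial σ R}
    (hb : ∀ d ∈ b.support, Finsupp.weight w d + n < N + 1) :
    Polynomial.C b * F.divX ∈ weightLT R w N := mem_weightLT.mpr fun i d hd => by
  classical
  rw [Polynomial.coeff_C_mul, Polynomial.coeff_divX] at hd
  obtain ⟨d₁, hd₁, d₂, hd₂, rfl⟩ := Finset.mem_add.mp (support_mul _ _ hd)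
  have h₁ := hb d₁ hd₁
  have h₂ := hF (i + 1) d₂ hd₂
  rw [map_add]
  omega

end LowWeight

section Degeneration

variable {σ ι R : Type*} [CommRing R] {w : σ → ℕ}

theorem isRegularModOthers_of_coeff_zero_eq_monomial {F : ι → (MvPolynomial σ R)[X]}
    {e : ι → σ →₀ ℕ} {n : ι → ℕ} (hF : ∀ s, IsTotalWeightHomogeneous w (n s) (F s))
    (he : Pairwise fun s t => Disjoint (e s).support (e t).support)
    (h0 : ∀ s, (F s).coeff 0 = monomial (e s) 1) : IsRegularModOthers F := by
  classical
  intro S s₀ hs₀ g hg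
  nontriviality R
  have hm : IsRegularModOthers fun s => (F s).coeff 0 := by
    simpa only [h0] using isRegularModOthers_monomial (R := R) he
  have hwe : ∀ s, Finsupp.weight w (e s) = n s := fun s => by
    simpa using hF s 0 (e s) (by
      rw [h0, mem_support_iff, coeff_monomial, if_pos rfl]
      exact one_ne_zero)
  obtain ⟨N, hN⟩ := exists_mem_weightLT w g
  induction N generalizing g with
  | zero => rw [eq_zero_of_mem_weightLT_zero hN]; exact zero_mem _
  | succ N ih =>
    have hg₀ : g.coeff 0 ∈ Ideal.span ((fun s => monomial (e s) (1 : R)) '' S) := by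
      have := hm S s₀ hs₀ _ (by simpa [Polynomial.mul_coeff_zero] using coeff_zero_mem_span hg)
      simpa only [h0] using this
    obtain ⟨b, hb, hbsupp⟩ := exists_eq_sum_mul_monomial_of_mem_span hg₀
    set g₁ := g.divX - ∑ s ∈ S, Polynomial.C (b s) * (F s).divX
    have hdecomp : g = ∑ s ∈ S, Polynomial.C (b s) * F s + Polynomial.X * g₁ :=
      eq_sum_C_mul_add_X_mul (by simpa only [h0] using hb)
    have hFg₁ : F s₀ * g₁ ∈ Ideal.span (F '' S) := by
      refine mem_span_of_X_mul_mem_span hm ?_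
      rw [show Polynomial.X * (F s₀ * g₁) =
        F s₀ * g - F s₀ * ∑ s ∈ S, Polynomial.C (b s) * F s by rw [hdecomp]; ring]
      exact sub_mem hg (Ideal.mul_mem_left _ _ (sum_mem fun s hs =>
        Ideal.mul_mem_left _ _ (mem_span_image_of_mem F hs)))
    have hg₁ : g₁ ∈ weightLT R w N := by
      refine sub_mem (divX_mem_weightLT hN) (sum_mem fun s _ =>
        C_mul_divX_mem_weightLT (hF s) fun d hd => ?_)
      have := mem_weightLT.mp hN 0 _ (hbsupp s d hd)
      rw [map_add, hwe] at this
      omega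
    rw [hdecomp]
    exact add_mem (sum_mem fun s hs => Ideal.mul_mem_left _ _ (mem_span_image_of_mem F hs))
      (Ideal.mul_mem_left _ _ (ih g₁ hFg₁ hg₁))

end Degeneration

section Homogenization

variable {σ ι R : Type*} [CommRing R]

noncomputable def homogenize (u : σ → ℕ) : MvPolynomial σ R →ₐ[R] (MvPolynomial σ R)[X] :=
  aeval fun v => Polynomial.C (X v) * Polynomial.X ^ u v

lemma homogenize_monomial (u : σ → ℕ) (d : σ →₀ ℕ) (a : R) :
    homogenize u (monomial d a) =
      Polynomial.C (monomial d a) * Polynomial.X ^ Finsupp.weight u d := by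
  rw [homogenize, aeval_monomial, monomial_eq, Finsupp.weight_apply]
  simp only [Finsupp.prod, mul_pow, Finset.prod_mul_distrib, ← pow_mul,
    Finset.prod_pow_eq_pow_sum, Finsupp.sum, ← map_pow, ← map_prod, map_mul,
    Polynomial.algebraMap_apply, smul_eq_mul]
  simp only [mul_comm (u _), algebraMap_eq, mul_assoc]

lemma mem_support_coeff_homogenize {u : σ → ℕ} {f : MvPolynomial σ R} {i : ℕ} {d : σ →₀ ℕ}
    (hd : d ∈ ((homogenize u f).coeff i).support) :
    d ∈ f.support ∧ Finsupp.weight u d = i := by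
  classical
  rw [← support_sum_monomial_coeff f] at hd
  simp only [map_sum, homogenize_monomial, Polynomial.finsetSum_coeff,
    Polynomial.coeff_C_mul_X_pow] at hd
  obtain ⟨d', hd', hdd'⟩ := Finset.mem_biUnion.mp (support_sum hd)
  split_ifs at hdd' with hi
  · rw [Finset.mem_singleton.mp (support_monomial_subset hdd')]
    exact ⟨hd', hi.symm⟩
  · simp at hdd'

lemma isTotalWeightHomogeneous_homogenize {u w : σ → ℕ} {n : ℕ} {f : MvPolynomial σ R}
    (hf : f.IsWeightedHomogeneous (u + w) n) :
    IsTotalWeightHomogeneous w n (homogenize u f) := fun i d hd => by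
  obtain ⟨hdf, rfl⟩ := mem_support_coeff_homogenize hd
  rw [← hf (mem_support_iff.mp hdf)]
  simp only [Finsupp.weight_apply, Pi.add_apply, smul_add, Finsupp.sum_add]

lemma eval_one_homogenize (u : σ → ℕ) (f : MvPolynomial σ R) :
    (homogenize u f).eval 1 = f := by
  change ((Polynomial.evalRingHom 1).comp (homogenize u).toRingHom) f = RingHom.id _ f
  congr 1
  refine ringHom_ext (fun r => ?_) fun v => ?_ <;> simp [homogenize]

theorem isRegularModOthers_of_homogenize (u w : σ → ℕ) {f : ι → MvPolynomial σ R}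
    {n : ι → ℕ} (hf : ∀ s, (f s).IsWeightedHomogeneous (u + w) (n s)) {e : ι → σ →₀ ℕ}
    (he : Pairwise fun s t => Disjoint (e s).support (e t).support)
    (h0 : ∀ s, (homogenize u (f s)).coeff 0 = monomial (e s) 1) : IsRegularModOthers f := by
  intro S s₀ hs₀ g hg
  have hF := isRegularModOthers_of_coeff_zero_eq_monomial
    (fun s => isTotalWeightHomogeneous_homogenize (hf s)) he h0 S s₀ hs₀ (homogenize u g) (by
      simpa [Ideal.map_span, Set.image_image] using Ideal.mem_map_of_mem (homogenize u) hg)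
  simpa [Ideal.map_span, Set.image_image, eval_one_homogenize] using
    Ideal.mem_map_of_mem (Polynomial.evalRingHom 1) hF

end Homogenization

section Bilinear

lemma Fin.castAdd_ne_natAdd {p q : ℕ} (a : Fin p) (b : Fin q) :
    Fin.castAdd q a ≠ Fin.natAdd p b := by
  simp only [ne_eq, Fin.ext_iff, Fin.val_castAdd, Fin.val_natAdd]
  omega

variable {p q k : ℕ} (c : Fin p × Fin q ↪ Fin k)

def specialVars : Set (Fin (p + q) × Fin k) :=
  {v | ∃ s, c s = v.2 ∧ (v.1 = Fin.castAdd q s.1 ∨ v.1 = Fin.natAdd p s.2)}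

noncomputable def specialExp (s : Fin p × Fin q) : Fin (p + q) × Fin k →₀ ℕ :=
  Finsupp.single (Fin.castAdd q s.1, c s) 1 + Finsupp.single (Fin.natAdd p s.2, c s) 1

lemma mem_specialVars_both_iff {a : Fin p} {b : Fin q} {i : Fin k} :
    (Fin.castAdd q a, i) ∈ specialVars c ∧ (Fin.natAdd p b, i) ∈ specialVars c ↔
      i = c (a, b) := by
  simp only [specialVars, Set.mem_ofPred_eq, Fin.castAdd_inj, Fin.natAdd_inj,
    Fin.castAdd_ne_natAdd, (Fin.castAdd_ne_natAdd _ _).symm, or_false, false_or]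
  constructor
  · rintro ⟨⟨s, rfl, rfl⟩, ⟨t, hts, rfl⟩⟩
    rw [c.injective hts]
  · rintro rfl
    exact ⟨⟨(a, b), rfl, rfl⟩, ⟨(a, b), rfl, rfl⟩⟩

noncomputable def specialWeight : Fin (p + q) × Fin k → ℕ := (specialVars c).indicator 1

noncomputable def specialDefect : Fin (p + q) × Fin k → ℕ := (specialVars c)ᶜ.indicator 1

lemma coeff_zero_homogenize_qPoly (s : Fin p × Fin q) :
    (homogenize (specialDefect c) (qPoly p q k s.1 s.2)).coeff 0 =
      monomial (specialExp c s) 1 := by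
  classical
  have hterm : ∀ x y : Fin (p + q) × Fin k,
      (homogenize (specialDefect c) (X x * X y : MvPolynomial _ ℂ)).coeff 0 =
        if x ∈ specialVars c ∧ y ∈ specialVars c then X x * X y else 0 := by
    intro x y
    simp only [homogenize, specialDefect, map_mul, aeval_X]
    rw [show ∀ a b : MvPolynomial (Fin (p + q) × Fin k) ℂ, ∀ m n : ℕ,
      Polynomial.C a * Polynomial.X ^ m * (Polynomial.C b * Polynomial.X ^ n) =
        Polynomial.C (a * b) * Polynomial.X ^ (m + n) from fun a b m n => by
          rw [map_mul, pow_add]; ring, Polynomial.coeff_C_mul_X_pow]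
    simp [Set.indicator_apply_eq_zero, eq_comm (a := 0)]
  simp only [qPoly, map_sum, Polynomial.finsetSum_coeff, hterm, mem_specialVars_both_iff]
  rw [Finset.sum_ite_eq', if_pos (Finset.mem_univ _), specialExp, X, X, monomial_mul, one_mul]

lemma snd_eq_of_mem_support_specialExp {s : Fin p × Fin q} {v : Fin (p + q) × Fin k}
    (hv : v ∈ (specialExp c s).support) : v.2 = c s := by
  classical
  rcases Finset.mem_union.mp (Finsupp.support_add hv) with h | h <;>
    rw [Finset.mem_singleton.mp (Finsupp.support_single_subset h)]

lemma pairwise_disjoint_support_specialExp :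
    Pairwise fun s t => Disjoint (specialExp c s).support (specialExp c t).support :=
  fun _ _ hst => Finset.disjoint_left.mpr fun _ hs ht => hst <| c.injective <|
    (snd_eq_of_mem_support_specialExp c hs).symm.trans (snd_eq_of_mem_support_specialExp c ht)

lemma specialDefect_add_specialWeight : specialDefect c + specialWeight c = 1 :=
  Set.indicator_compl_add_self _ _

lemma isHomogeneous_qPoly (a : Fin p) (b : Fin q) : (qPoly p q k a b).IsHomogeneous 2 :=
  IsHomogeneous.sum _ _ _ fun _ _ => (isHomogeneous_X _ _).mul (isHomogeneous_X _ _)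

end Bilinear

theorem isRegularModOthers_qPoly {p q k : ℕ} (hk : p * q ≤ k) :
    IsRegularModOthers fun s : Fin p × Fin q => qPoly p q k s.1 s.2 := by
  obtain ⟨c⟩ : Nonempty (Fin p × Fin q ↪ Fin k) :=
    Function.Embedding.nonempty_of_card_le (by simpa using hk)
  exact isRegularModOthers_of_homogenize (specialDefect c) (specialWeight c) (n := fun _ => 2)
    (fun s => by rw [specialDefect_add_specialWeight]; exact isHomogeneous_qPoly s.1 s.2)
    (pairwise_disjoint_support_specialExp c) (coeff_zero_homogenize_qPoly c)

lemma span_range_qPoly_ne_top (p q k : ℕ) :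
    Ideal.span (Set.range fun s : Fin p × Fin q => qPoly p q k s.1 s.2) ≠ ⊤ :=
  ne_top_of_le_ne_top (RingHom.ker_ne_top constantCoeff)
    (Ideal.span_le.mpr (by rintro _ ⟨s, rfl⟩; simp [qPoly]))

lemma flatMap_qPoly_eq_map_product (p q k : ℕ) :
    ((List.finRange p).flatMap fun α => (List.finRange q).map fun μ => qPoly p q k α μ) =
      (List.finRange p ×ˢ List.finRange q).map fun s => qPoly p q k s.1 s.2 := by
  simp only [SProd.sprod, List.product, List.map_flatMap, List.map_map]
  rfl

theorem stmt1_general (p q k : ℕ) (hkpq : p * q ≤ k)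
    (l : List (MvPolynomial (Fin (p + q) × Fin k) ℂ))
    (hl : l.Perm ((List.finRange p).flatMap fun α =>
      (List.finRange q).map fun μ => qPoly p q k α μ)) :
    RingTheory.Sequence.IsRegular (MvPolynomial (Fin (p + q) × Fin k) ℂ) l := by
  rw [flatMap_qPoly_eq_map_product] at hl
  obtain ⟨L, rfl, hL⟩ := (congrFun₂ (List.eq_map_comp_perm _) _ _).mpr hl
  exact (isRegularModOthers_qPoly hkpq).isRegular_map
    (hL.nodup_iff.mpr ((List.nodup_finRange p).product (List.nodup_finRange q)))
    (span_range_qPoly_ne_top p q k)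

/-- Let `p, q, k` be positive integers with `k ≥ pq`.  Then the `pq`
quadratic polynomials `q_{αμ}` (for `1 ≤ α ≤ p` and `p+1 ≤ μ ≤ p+q`), listed in any
fixed order, form a regular sequence in `P_k`. -/
theorem stmt1 (p q k : ℕ) (hp : 0 < p) (hq : 0 < q) (hk : 0 < k) (hkpq : p * q ≤ k)
    (l : List (MvPolynomial (Fin (p + q) × Fin k) ℂ))
    (hl : l.Perm ((List.finRange p).flatMap fun α =>
      (List.finRange q).map fun μ => qPoly p q k α μ)) :
    RingTheory.Sequence.IsRegular (MvPolynomial (Fin (p + q) × Fin k) ℂ) l :=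
  stmt1_general p q k hkpq l hl
end

section
/- Let p, q, k be positive integers with p ≥ kq, and let P_k = ℂ[z_{βi} : 1 ≤ β ≤ p+q, 1 ≤ i ≤ k]. For 1 ≤ α ≤ p and p+1 ≤ μ ≤ p+q set q_{αμ} = Σ_{i=1}^k z_{αi} z_{μi}. Then the subsequence (q_{α, p+⌈α/k⌉})_{1 ≤ α ≤ kq}, consisting of kq of these quadratics (the block of indices α with (m−1)k < α ≤ mk being paired with μ = p+m for 1 ≤ m ≤ q), is a regular sequence in P_k. -/
/-!
Give `z_{βi}` weight `1` when `β ≤ p` and `β ≡ i (mod k)`, and weight `0` otherwise. Then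
`q_{α, p+⌈α/k⌉}` is the monomial `z_{αj} z_{μj}` (`j ≡ α mod k`) plus terms of weight `0`, and
these leading monomials are pairwise coprime: distinct `α` paired with the same `μ` have
distinct `j`.

For polynomials `f_t = X^{m_t} + (terms of smaller weight)` with pairwise coprime `m_t`, the
top-weight component of every element of the ideal `(f_t)_{t ∈ s}` lies in the monomial ideal
`(X^{m_t})_{t ∈ s}`; this is proved by adding one `f_a` at a time. It makes every `f_a` a
non-zero-divisor modulo the others: if `u f_a` lies in the ideal, the top-weight component of `u`
times `X^{m_a}` lies in the monomial ideal, hence, by coprimality, so does the top-weight component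
of `u`, and `u` can be reduced modulo the ideal to smaller weight.
-/

open MvPolynomial

lemma Ideal.ofList_take_ofFn {R : Type*} [Semiring R] {r : ℕ} (f : Fin r → R) (i : ℕ) :
    Ideal.ofList ((List.ofFn f).take i) = Ideal.span (f '' {t | (t : ℕ) < i}) := by
  unfold Ideal.ofList
  congr 1
  ext x
  simp only [Set.mem_ofPred_eq, List.mem_take_iff_getElem, List.length_ofFn, List.getElem_ofFn,
    Set.mem_image, lt_min_iff]
  exact ⟨fun ⟨j, ⟨hji, hjr⟩, hx⟩ => ⟨⟨j, hjr⟩, hji, hx⟩, fun ⟨t, ht, hx⟩ => ⟨t, ⟨ht, t.2⟩, hx⟩⟩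

namespace MvPolynomial

section Semiring

variable {σ R : Type*} [CommSemiring R]

lemma X_mul_X_eq_monomial (x y : σ) :
    (X x * X y : MvPolynomial σ R) = monomial (Finsupp.single x 1 + Finsupp.single y 1) 1 := by
  rw [X, X, monomial_mul, one_mul]

lemma exists_add_eq_of_mem_support_mul {φ ψ : MvPolynomial σ R} {μ : σ →₀ ℕ}
    (h : μ ∈ (φ * ψ).support) : ∃ a ∈ φ.support, ∃ b ∈ ψ.support, a + b = μ := by
  classical
  exact Finset.mem_add.1 (support_mul φ ψ h)

lemma mem_span_monomial_of_mul_monomial_mem {S : Set (σ →₀ ℕ)} {M : σ →₀ ℕ}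
    (hS : ∀ μ ∈ S, Disjoint μ.support M.support) {φ : MvPolynomial σ R}
    (h : φ * monomial M 1 ∈ Ideal.span ((monomial · 1) '' S)) :
    φ ∈ Ideal.span ((monomial · (1 : R)) '' S) := by
  rw [mem_ideal_span_monomial_image] at h ⊢
  intro ν hν
  have hνM : ν + M ∈ (φ * monomial M 1).support := by
    rwa [mem_support_iff, coeff_mul_monomial', if_pos le_add_self, add_tsub_cancel_right,
      mul_one, ← mem_support_iff]
  obtain ⟨μ, hμS, hμ⟩ := h _ hνM
  refine ⟨μ, hμS, fun x => ?_⟩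
  by_cases hx : x ∈ μ.support
  · simpa [Finsupp.notMem_support_iff.1 (Finset.disjoint_left.1 (hS μ hμS) hx)] using hμ x
  · simp [Finsupp.notMem_support_iff.1 hx]

variable (w : σ → ℕ)

noncomputable def weightedDegreeLE (n : ℕ) : Submodule R (MvPolynomial σ R) :=
  restrictSupport R {μ | Finsupp.weight w μ ≤ n}

noncomputable def weightedDegreeLT (n : ℕ) : Submodule R (MvPolynomial σ R) :=
  restrictSupport R {μ | Finsupp.weight w μ < n}

variable {w} {φ ψ : MvPolynomial σ R} {a b n : ℕ}

lemma mem_weightedDegreeLE :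
    φ ∈ weightedDegreeLE w n ↔ ∀ μ ∈ φ.support, Finsupp.weight w μ ≤ n :=
  Iff.rfl

lemma mem_weightedDegreeLT :
    φ ∈ weightedDegreeLT w n ↔ ∀ μ ∈ φ.support, Finsupp.weight w μ < n :=
  Iff.rfl

lemma eq_zero_of_mem_weightedDegreeLT_zero (h : φ ∈ weightedDegreeLT w 0) : φ = 0 := by
  by_contra hφ
  obtain ⟨μ, hμ⟩ := support_nonempty.2 hφ
  exact Nat.not_lt_zero _ (mem_weightedDegreeLT.1 h μ hμ)

lemma exists_mem_weightedDegreeLT (w : σ → ℕ) (φ : MvPolynomial σ R) :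
    ∃ N, φ ∈ weightedDegreeLT w N :=
  ⟨φ.support.sup (Finsupp.weight w) + 1, mem_weightedDegreeLT.2 fun _ hμ =>
    Nat.lt_succ_of_le (Finset.le_sup (f := Finsupp.weight w) hμ)⟩

lemma weightedDegreeLT_succ (n : ℕ) :
    weightedDegreeLT w (n + 1) = (weightedDegreeLE w n : Submodule R (MvPolynomial σ R)) := by
  ext φ
  simp only [mem_weightedDegreeLT, mem_weightedDegreeLE, Nat.lt_succ_iff]

lemma weightedDegreeLT_le_weightedDegreeLE (n : ℕ) :
    (weightedDegreeLT w n : Submodule R (MvPolynomial σ R)) ≤ weightedDegreeLE w n :=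
  restrictSupport_mono _ fun _ (hμ : _ < n) => le_of_lt hμ

lemma weightedDegreeLE_mono (h : a ≤ b) :
    (weightedDegreeLE w a : Submodule R (MvPolynomial σ R)) ≤ weightedDegreeLE w b :=
  restrictSupport_mono _ fun _ hμ => le_trans hμ h

lemma monomial_mem_weightedDegreeLE {μ : σ →₀ ℕ} (c : R) (h : Finsupp.weight w μ ≤ n) :
    monomial μ c ∈ weightedDegreeLE w n := mem_weightedDegreeLE.2 fun ν hν => by
  rw [Finset.mem_singleton.1 (support_monomial_subset hν)]
  exact h

lemma monomial_mem_weightedDegreeLT {μ : σ →₀ ℕ} (c : R) (h : Finsupp.weight w μ < n) :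
    monomial μ c ∈ weightedDegreeLT w n := mem_weightedDegreeLT.2 fun ν hν => by
  rw [Finset.mem_singleton.1 (support_monomial_subset hν)]
  exact h

lemma mul_mem_weightedDegreeLE (hφ : φ ∈ weightedDegreeLE w a)
    (hψ : ψ ∈ weightedDegreeLE w b) : φ * ψ ∈ weightedDegreeLE w (a + b) :=
  mem_weightedDegreeLE.2 fun μ hμ => by
    obtain ⟨c, hc, d, hd, rfl⟩ := exists_add_eq_of_mem_support_mul hμ
    rw [map_add]
    exact add_le_add (mem_weightedDegreeLE.1 hφ c hc) (mem_weightedDegreeLE.1 hψ d hd)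

lemma mul_mem_weightedDegreeLT (hφ : φ ∈ weightedDegreeLE w a)
    (hψ : ψ ∈ weightedDegreeLT w b) : φ * ψ ∈ weightedDegreeLT w (a + b) :=
  mem_weightedDegreeLT.2 fun μ hμ => by
    obtain ⟨c, hc, d, hd, rfl⟩ := exists_add_eq_of_mem_support_mul hμ
    rw [map_add]
    exact add_lt_add_of_le_of_lt (mem_weightedDegreeLE.1 hφ c hc) (mem_weightedDegreeLT.1 hψ d hd)

lemma weightedHomogeneousComponent_eq_zero_of_mem_weightedDegreeLT
    (h : φ ∈ weightedDegreeLT w n) : weightedHomogeneousComponent w n φ = 0 :=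
  weightedHomogeneousComponent_eq_zero' n φ fun μ hμ => (mem_weightedDegreeLT.1 h μ hμ).ne

lemma weightedHomogeneousComponent_add_weight_mul_monomial (φ : MvPolynomial σ R)
    (n : ℕ) (μ : σ →₀ ℕ) :
    weightedHomogeneousComponent w (n + Finsupp.weight w μ) (φ * monomial μ 1)
      = weightedHomogeneousComponent w n φ * monomial μ 1 := by
  classical
  ext ν
  simp only [coeff_weightedHomogeneousComponent, coeff_mul_monomial', mul_one]
  by_cases hμν : μ ≤ ν
  · have : Finsupp.weight w ν = Finsupp.weight w (ν - μ) + Finsupp.weight w μ := by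
      rw [← map_add, tsub_add_cancel_of_le hμν]
    simp only [hμν, this, Nat.add_right_cancel_iff, if_true]
  · simp [hμν]

end Semiring

variable {σ R : Type*} [CommRing R]

lemma sub_weightedHomogeneousComponent_mem_weightedDegreeLT {w : σ → ℕ} {n : ℕ}
    {φ : MvPolynomial σ R} (h : φ ∈ weightedDegreeLE w n) :
    φ - weightedHomogeneousComponent w n φ ∈ weightedDegreeLT w n := by
  classical
  refine mem_weightedDegreeLT.2 fun μ hμ => ?_
  rw [mem_support_iff, coeff_sub, coeff_weightedHomogeneousComponent] at hμ
  split_ifs at hμ with hn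
  · exact absurd (sub_self _) hμ
  · rw [sub_zero] at hμ
    exact lt_of_le_of_ne (mem_weightedDegreeLE.1 h μ (mem_support_iff.2 hμ)) hn

section LeadingMonomial

variable (w : σ → ℕ)

def HasWeightedLeadingMonomial (f : MvPolynomial σ R) (m : σ →₀ ℕ) : Prop :=
  f - monomial m 1 ∈ weightedDegreeLT w (Finsupp.weight w m)

variable {w} {f φ : MvPolynomial σ R} {m : σ →₀ ℕ}

lemma HasWeightedLeadingMonomial.mem_weightedDegreeLE (hf : HasWeightedLeadingMonomial w f m) :
    f ∈ weightedDegreeLE w (Finsupp.weight w m) := by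
  rw [← add_sub_cancel (monomial m 1) f]
  exact add_mem (monomial_mem_weightedDegreeLE 1 le_rfl)
    (weightedDegreeLT_le_weightedDegreeLE _ hf)

lemma HasWeightedLeadingMonomial.weightedHomogeneousComponent_mul
    (hf : HasWeightedLeadingMonomial w f m) {n : ℕ} (hφ : φ ∈ weightedDegreeLE w n) :
    weightedHomogeneousComponent w (n + Finsupp.weight w m) (φ * f)
      = weightedHomogeneousComponent w n φ * monomial m 1 := by
  rw [← add_sub_cancel (monomial m 1) f, mul_add, map_add,
    weightedHomogeneousComponent_add_weight_mul_monomial,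
    weightedHomogeneousComponent_eq_zero_of_mem_weightedDegreeLT (mul_mem_weightedDegreeLT hφ hf),
    add_zero]

end LeadingMonomial

section InitialIdeal

variable (w : σ → ℕ)

def WeightedInitialIdealLE (I J : Ideal (MvPolynomial σ R)) : Prop :=
  ∀ z ∈ I, ∀ n, z ∈ weightedDegreeLE w n → weightedHomogeneousComponent w n z ∈ J

variable {w} {ι : Type*} {m : ι → σ →₀ ℕ} {f : ι → MvPolynomial σ R} {s : Set ι}

theorem WeightedInitialIdealLE.ne_top [Nontrivial R] {I : Ideal (MvPolynomial σ R)}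
    {S : Set (σ →₀ ℕ)} (hI : WeightedInitialIdealLE w I (Ideal.span ((monomial · 1) '' S)))
    (hS : 0 ∉ S) : I ≠ ⊤ := by
  intro htop
  have h1 := hI 1 (htop ▸ Submodule.mem_top) 0 (mem_weightedDegreeLE.2 fun _ hμ =>
    (isWeightedHomogeneous_one (R := R) w (mem_support_iff.1 hμ)).le)
  rw [(isWeightedHomogeneous_one (R := R) w).weightedHomogeneousComponent_same,
    mem_ideal_span_monomial_image] at h1
  obtain ⟨μ, hμS, hμ⟩ := h1 0 (by simp)
  exact hS (nonpos_iff_eq_zero.1 hμ ▸ hμS)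

theorem exists_sub_mem_span_of_weightedHomogeneousComponent_mem
    (hf : ∀ t, HasWeightedLeadingMonomial w (f t) (m t)) {n : ℕ}
    {φ : MvPolynomial σ R} (hφ : φ ∈ weightedDegreeLE w n)
    (hJ : weightedHomogeneousComponent w n φ ∈ Ideal.span ((monomial · 1) '' (m '' s))) :
    ∃ φ', φ - φ' ∈ Ideal.span (f '' s) ∧ φ' ∈ weightedDegreeLT w n := by
  set ψ := weightedHomogeneousComponent w n φ
  have hdvd (ν : ψ.support) : ∃ t ∈ s, m t ≤ ν := by
    obtain ⟨_, ⟨t, ht, rfl⟩, hle⟩ := mem_ideal_span_monomial_image.1 hJ ν ν.2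
    exact ⟨t, ht, hle⟩
  choose t hts hle using hdvd
  -- cancel each top-weight monomial `ν` of `φ` against a multiple of `f (t ν)`
  let quot (ν : ψ.support) : MvPolynomial σ R := monomial (ν.1 - m (t ν)) (coeff ν ψ)
  refine ⟨φ - ∑ ν, quot ν * f (t ν), ?_, ?_⟩
  · rw [sub_sub_cancel]
    exact Ideal.sum_mem _ fun ν _ =>
      Ideal.mul_mem_left _ _ (Ideal.subset_span (Set.mem_image_of_mem f (hts ν)))
  have hsplit (ν : ψ.support) : quot ν * f (t ν)
      = monomial ν (coeff ν ψ) + quot ν * (f (t ν) - monomial (m (t ν)) 1) := by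
    rw [mul_sub, monomial_mul, mul_one, tsub_add_cancel_of_le (hle ν), add_sub_cancel]
  rw [Finset.sum_congr rfl fun ν _ => hsplit ν, Finset.sum_add_distrib,
    Finset.sum_coe_sort ψ.support fun ν => monomial ν (coeff ν ψ), support_sum_monomial_coeff,
    ← sub_sub]
  refine sub_mem (sub_weightedHomogeneousComponent_mem_weightedDegreeLT hφ)
    (sum_mem fun ν _ => ?_)
  have hν : Finsupp.weight w (ν.1 - m (t ν)) + Finsupp.weight w (m (t ν)) = n := by
    rw [← map_add, tsub_add_cancel_of_le (hle ν)]
    exact weightedHomogeneousComponent_isWeightedHomogeneous n φ (mem_support_iff.1 ν.2)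
  exact hν ▸ mul_mem_weightedDegreeLT (monomial_mem_weightedDegreeLE _ le_rfl) (hf _)

theorem exists_sub_mem_span_of_mul_sub_mem (hf : ∀ t, HasWeightedLeadingMonomial w (f t) (m t))
    (hI : WeightedInitialIdealLE w (Ideal.span (f '' s)) (Ideal.span ((monomial · 1) '' (m '' s))))
    {F : MvPolynomial σ R} {M : σ →₀ ℕ} (hF : HasWeightedLeadingMonomial w F M)
    (hdisj : ∀ t ∈ s, Disjoint (m t).support M.support) {N : ℕ} {h z : MvPolynomial σ R}
    (hh : h ∈ weightedDegreeLE w N) (hz : z ∈ weightedDegreeLT w (N + Finsupp.weight w M))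
    (hmem : h * F - z ∈ Ideal.span (f '' s)) :
    ∃ h', h - h' ∈ Ideal.span (f '' s) ∧ h' ∈ weightedDegreeLT w N := by
  refine exists_sub_mem_span_of_weightedHomogeneousComponent_mem hf hh
    (mem_span_monomial_of_mul_monomial_mem (by simpa using hdisj) ?_)
  have hdeg : h * F - z ∈ weightedDegreeLE w (N + Finsupp.weight w M) :=
    sub_mem (mul_mem_weightedDegreeLE hh hF.mem_weightedDegreeLE)
      (weightedDegreeLT_le_weightedDegreeLE _ hz)
  simpa [hF.weightedHomogeneousComponent_mul hh,
    weightedHomogeneousComponent_eq_zero_of_mem_weightedDegreeLT hz] using hI _ hmem _ hdeg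

theorem mem_span_of_mul_mem_span (hf : ∀ t, HasWeightedLeadingMonomial w (f t) (m t))
    (hI : WeightedInitialIdealLE w (Ideal.span (f '' s)) (Ideal.span ((monomial · 1) '' (m '' s))))
    {F : MvPolynomial σ R} {M : σ →₀ ℕ} (hF : HasWeightedLeadingMonomial w F M)
    (hdisj : ∀ t ∈ s, Disjoint (m t).support M.support) {u : MvPolynomial σ R}
    (hu : u * F ∈ Ideal.span (f '' s)) : u ∈ Ideal.span (f '' s) := by
  obtain ⟨N, huN⟩ := exists_mem_weightedDegreeLT w u
  induction N generalizing u with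
  | zero => rw [eq_zero_of_mem_weightedDegreeLT_zero huN]; exact zero_mem _
  | succ N ih =>
    rw [weightedDegreeLT_succ] at huN
    obtain ⟨u', hu'u, hu'⟩ := exists_sub_mem_span_of_mul_sub_mem hf hI hF hdisj huN
      (zero_mem _) (by rwa [sub_zero])
    have hu'F : u' * F ∈ Ideal.span (f '' s) := by
      rw [← sub_sub_cancel u u', sub_mul]
      exact sub_mem hu (Ideal.mul_mem_right _ _ hu'u)
    rw [← sub_add_cancel u u']
    exact add_mem hu'u (ih hu'F hu')

theorem weightedInitialIdealLE_insert (hf : ∀ t, HasWeightedLeadingMonomial w (f t) (m t))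
    (hI : WeightedInitialIdealLE w (Ideal.span (f '' s)) (Ideal.span ((monomial · 1) '' (m '' s))))
    {a : ι} (hdisj : ∀ t ∈ s, Disjoint (m t).support (m a).support) :
    WeightedInitialIdealLE w (Ideal.span (f '' insert a s))
      (Ideal.span ((monomial · 1) '' (m '' insert a s))) := by
  have hJ : Ideal.span ((monomial · 1) '' (m '' s))
      ≤ Ideal.span ((monomial · (1 : R)) '' (m '' insert a s)) :=
    Ideal.span_mono (Set.image_mono (Set.image_mono (Set.subset_insert a s)))
  have hXa : monomial (m a) (1 : R) ∈ Ideal.span ((monomial · 1) '' (m '' insert a s)) :=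
    Ideal.subset_span ⟨m a, Set.mem_image_of_mem m (Set.mem_insert a s), rfl⟩
  intro z hz n hzn
  rw [Set.image_insert_eq, Ideal.mem_span_insert] at hz
  obtain ⟨h, y, hy, rfl⟩ := hz
  obtain ⟨N, hN⟩ := exists_mem_weightedDegreeLT w h
  induction N generalizing h y with
  | zero =>
    rw [eq_zero_of_mem_weightedDegreeLT_zero hN, zero_mul, zero_add] at hzn ⊢
    exact hJ (hI y hy n hzn)
  | succ N ih =>
    rw [weightedDegreeLT_succ] at hN
    by_cases hle : N + Finsupp.weight w (m a) ≤ n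
    · -- the weight-`n` component of `h * f a` is a multiple of `X ^ m a`
      obtain ⟨D, rfl⟩ : ∃ D, n = D + Finsupp.weight w (m a) :=
        ⟨n - Finsupp.weight w (m a), by omega⟩
      have hyn : y ∈ weightedDegreeLE w (D + Finsupp.weight w (m a)) := by
        rw [← add_sub_cancel_left (h * f a) y]
        exact sub_mem hzn (weightedDegreeLE_mono hle
          (mul_mem_weightedDegreeLE hN (hf a).mem_weightedDegreeLE))
      rw [map_add, (hf a).weightedHomogeneousComponent_mul (weightedDegreeLE_mono (by omega) hN)]
      exact add_mem (Ideal.mul_mem_left _ _ hXa) (hJ (hI y hy _ hyn))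
    · -- the top-weight component of `h * f a` cancels against `y`, so `h` can be reduced
      have hzN : h * f a + y ∈ weightedDegreeLT w (N + Finsupp.weight w (m a)) :=
        mem_weightedDegreeLT.2 fun μ hμ => by have := mem_weightedDegreeLE.1 hzn μ hμ; omega
      obtain ⟨h', hh'h, hh'⟩ := exists_sub_mem_span_of_mul_sub_mem hf hI (hf a) hdisj hN hzN
        (by simpa using neg_mem hy)
      have hsplit : h * f a + y = h' * f a + (y + (h - h') * f a) := by ring
      rw [hsplit] at hzn ⊢
      exact ih h' _ (add_mem hy (Ideal.mul_mem_right _ _ hh'h)) hzn hh'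

theorem weightedInitialIdealLE_of_finite (hf : ∀ t, HasWeightedLeadingMonomial w (f t) (m t))
    (hdisj : Pairwise fun t t' => Disjoint (m t).support (m t').support) (hs : s.Finite) :
    WeightedInitialIdealLE w (Ideal.span (f '' s)) (Ideal.span ((monomial · 1) '' (m '' s))) := by
  induction s, hs using Set.Finite.induction_on with
  | empty =>
    intro z hz n _
    rw [Set.image_empty, Ideal.span_empty, Ideal.mem_bot] at hz
    rw [hz, map_zero]
    exact zero_mem _
  | @insert a s ha _ hI =>
    exact weightedInitialIdealLE_insert hf hI fun t ht => hdisj (ne_of_mem_of_not_mem ht ha)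

end InitialIdeal

theorem isRegular_ofFn_of_hasWeightedLeadingMonomial [Nontrivial R] {w : σ → ℕ} {r : ℕ}
    {m : Fin r → σ →₀ ℕ} {f : Fin r → MvPolynomial σ R}
    (hf : ∀ t, HasWeightedLeadingMonomial w (f t) (m t))
    (hdisj : Pairwise fun t t' => Disjoint (m t).support (m t').support) (hm : ∀ t, m t ≠ 0) :
    RingTheory.Sequence.IsRegular (MvPolynomial σ R) (List.ofFn f) := by
  have hI (i : ℕ) := weightedInitialIdealLE_of_finite hf hdisj (Set.toFinite {t : Fin r | t < i})
  refine ⟨⟨fun i hi => ?_⟩, ?_⟩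
  · rw [isSMulRegular_quotient_iff_mem_of_smul_mem, smul_eq_mul, Ideal.mul_top,
      Ideal.ofList_take_ofFn, List.getElem_ofFn]
    rw [List.length_ofFn] at hi
    intro u hu
    rw [smul_eq_mul, mul_comm] at hu
    exact mem_span_of_mul_mem_span hf (hI i) (hf ⟨i, hi⟩) (fun t ht => hdisj (Fin.ne_of_lt ht)) hu
  · rw [Ne, eq_comm, smul_eq_mul, Ideal.mul_top, ← List.take_length (l := List.ofFn f),
      Ideal.ofList_take_ofFn]
    exact (hI _).ne_top fun ⟨t, _, ht⟩ => hm t ht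

end MvPolynomial

section Quadrics

def quadricWeight (p q k : ℕ) (v : Fin (p + q) × Fin k) : ℕ :=
  if (v.1 : ℕ) < p ∧ (v.1 : ℕ) % k = v.2 then 1 else 0

variable {p q k : ℕ}

lemma weight_quadricWeight (α : Fin p) (μ : Fin q) (i : Fin k) :
    Finsupp.weight (quadricWeight p q k)
        (Finsupp.single (Fin.castAdd q α, i) 1 + Finsupp.single (Fin.natAdd p μ, i) 1)
      = if (α : ℕ) % k = i then 1 else 0 := by
  simp [Finsupp.weight_single, quadricWeight]

lemma hasWeightedLeadingMonomial_qPoly (α : Fin p) (μ : Fin q) (j : Fin k)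
    (hj : (α : ℕ) % k = j) :
    HasWeightedLeadingMonomial (quadricWeight p q k) (qPoly p q k α μ)
      (Finsupp.single (Fin.castAdd q α, j) 1 + Finsupp.single (Fin.natAdd p μ, j) 1) := by
  unfold HasWeightedLeadingMonomial qPoly
  rw [← Finset.add_sum_erase _ _ (Finset.mem_univ j), X_mul_X_eq_monomial, add_sub_cancel_left,
    weight_quadricWeight, if_pos hj]
  refine sum_mem fun i hi => ?_
  rw [X_mul_X_eq_monomial]
  refine monomial_mem_weightedDegreeLT 1 ?_
  rw [weight_quadricWeight, if_neg (fun h => Finset.ne_of_mem_erase hi (Fin.ext (hj ▸ h).symm))]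
  exact Nat.zero_lt_one

noncomputable def quadricLeadingExponent (hk : 0 < k) (hpkq : k * q ≤ p) (a : Fin (k * q)) :
    Fin (p + q) × Fin k →₀ ℕ :=
  let j : Fin k := ⟨a % k, Nat.mod_lt _ hk⟩
  let μ : Fin q := ⟨a / k, (Nat.div_lt_iff_lt_mul hk).2 (by simpa [mul_comm] using a.2)⟩
  Finsupp.single (Fin.castAdd q (Fin.castLE hpkq a), j) 1 + Finsupp.single (Fin.natAdd p μ, j) 1

lemma quadricLeadingExponent_ne_zero (hk : 0 < k) (hpkq : k * q ≤ p) (a : Fin (k * q)) :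
    quadricLeadingExponent hk hpkq a ≠ 0 := fun h => by
  simpa [quadricLeadingExponent] using
    DFunLike.congr_fun h (Fin.castAdd q (Fin.castLE hpkq a), ⟨a % k, Nat.mod_lt _ hk⟩)

lemma disjoint_support_quadricLeadingExponent (hk : 0 < k) (hpkq : k * q ≤ p)
    {a b : Fin (k * q)} (hab : a ≠ b) :
    Disjoint (quadricLeadingExponent hk hpkq a).support
      (quadricLeadingExponent hk hpkq b).support := by
  classical
  have hrow (c : Fin (k * q)) : (c : ℕ) < p := lt_of_lt_of_le c.2 hpkq
  unfold quadricLeadingExponent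
  rw [Finsupp.support_single_add_single _ one_ne_zero one_ne_zero,
    Finsupp.support_single_add_single _ one_ne_zero one_ne_zero]
  · simp only [Finset.disjoint_insert_left, Finset.disjoint_insert_right, Finset.mem_insert,
      Finset.mem_singleton, Finset.disjoint_singleton, Prod.ext_iff, Fin.ext_iff, Fin.val_castAdd,
      Fin.val_natAdd, Fin.val_castLE]
    refine ⟨?_, ?_, fun h => hab ?_⟩
    · rintro (⟨h, -⟩ | ⟨h, -⟩)
      · exact hab (Fin.ext h.symm)
      · exact (hrow b).not_ge (h ▸ Nat.le_add_right _ _)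
    · rintro ⟨h, -⟩
      exact (hrow a).not_ge (h ▸ Nat.le_add_right _ _)
    · simp only [Prod.ext_iff, Fin.ext_iff, Fin.val_natAdd, Nat.add_left_cancel_iff] at h
      rw [Fin.ext_iff, ← Nat.div_add_mod a k, ← Nat.div_add_mod b k, h.1, h.2]
  all_goals
    intro h
    have := congrArg (fun v => (v.1 : ℕ)) h
    simp only [Fin.val_castAdd, Fin.val_natAdd, Fin.val_castLE] at this
    exact (hrow _).not_ge (this ▸ Nat.le_add_right _ _)

end Quadrics

/-- Here `α` is indexed from `0` by `a : Fin (k * q)`, so the 1-based pairing `μ = p + ⌈α/k⌉`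
becomes the 0-based pairing `μ = p + a / k`. -/
theorem stmt2 (p q k : ℕ) (hk : 0 < k) (hpkq : k * q ≤ p) :
    RingTheory.Sequence.IsRegular (MvPolynomial (Fin (p + q) × Fin k) ℂ)
      (List.ofFn fun a : Fin (k * q) =>
        qPoly p q k (Fin.castLE hpkq a)
          ⟨a.val / k, (Nat.div_lt_iff_lt_mul hk).mpr (by simpa [mul_comm] using a.isLt)⟩) :=
  isRegular_ofFn_of_hasWeightedLeadingMonomial (m := quadricLeadingExponent hk hpkq)
    (fun a => hasWeightedLeadingMonomial_qPoly _ _ ⟨a % k, Nat.mod_lt _ hk⟩ rfl)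
    (fun _ _ hab => disjoint_support_quadricLeadingExponent hk hpkq hab)
    (quadricLeadingExponent_ne_zero hk hpkq)
end

section
/- Let p, q, k be positive integers and P_k = ℂ[z_{βi} : 1 ≤ β ≤ p+q, 1 ≤ i ≤ k]. Set q_{αμ} = Σ_{i=1}^k z_{αi} z_{μi} for 1 ≤ α ≤ p, p+1 ≤ μ ≤ p+q, and let I be the ideal of P_k generated by all the q_{αμ}. Suppose f is a polynomial involving only the 'positive' variables z_{αi} (1 ≤ α ≤ p) and g is a polynomial involving only the 'negative' variables z_{μi} (p+1 ≤ μ ≤ p+q). If f + g ∈ I, then f and g are constants with f = −g; in particular, if f or g has zero constant term, then f = 0 and g = 0. -/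
/-!
Restricting to the coordinate subspace where all negative variables vanish kills every
`q_{αμ}`, since each of its monomials contains a negative variable; it fixes `f` and sends `g`
to its constant term. Hence `f` is a constant, and symmetrically so is `g`.
-/

open MvPolynomial

namespace MvPolynomial

variable {R ι : Type*} [CommSemiring R] {p q : ℕ}

noncomputable def restrictLeft (p q : ℕ) :
    MvPolynomial (Fin (p + q) × ι) R →ₐ[R] MvPolynomial (Fin p × ι) R :=
  aeval fun v => Fin.addCases (fun α => X (α, v.2)) (fun _ => 0) v.1

noncomputable def restrictRight (p q : ℕ) :
    MvPolynomial (Fin (p + q) × ι) R →ₐ[R] MvPolynomial (Fin q × ι) R :=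
  aeval fun v => Fin.addCases (fun _ => 0) (fun μ => X (μ, v.2)) v.1

@[simp] theorem restrictLeft_X_castAdd (α : Fin p) (i : ι) :
    restrictLeft p q (X (Fin.castAdd q α, i) : MvPolynomial _ R) = X (α, i) := by
  simp [restrictLeft]

@[simp] theorem restrictLeft_X_natAdd (μ : Fin q) (i : ι) :
    restrictLeft p q (X (Fin.natAdd p μ, i) : MvPolynomial _ R) = 0 := by
  simp [restrictLeft]

@[simp] theorem restrictRight_X_castAdd (α : Fin p) (i : ι) :
    restrictRight p q (X (Fin.castAdd q α, i) : MvPolynomial _ R) = 0 := by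
  simp [restrictRight]

@[simp] theorem restrictRight_X_natAdd (μ : Fin q) (i : ι) :
    restrictRight p q (X (Fin.natAdd p μ, i) : MvPolynomial _ R) = X (μ, i) := by
  simp [restrictRight]

@[simp] theorem restrictLeft_rename_castAdd (f : MvPolynomial (Fin p × ι) R) :
    restrictLeft p q (rename (fun x => (Fin.castAdd q x.1, x.2)) f) = f := by
  induction f using MvPolynomial.induction_on <;> simp_all

@[simp] theorem restrictLeft_rename_natAdd (g : MvPolynomial (Fin q × ι) R) :
    restrictLeft p q (rename (fun x => (Fin.natAdd p x.1, x.2)) g) = C (constantCoeff g) := by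
  induction g using MvPolynomial.induction_on <;> simp_all

@[simp] theorem restrictRight_rename_castAdd (f : MvPolynomial (Fin p × ι) R) :
    restrictRight p q (rename (fun x => (Fin.castAdd q x.1, x.2)) f) = C (constantCoeff f) := by
  induction f using MvPolynomial.induction_on <;> simp_all

@[simp] theorem restrictRight_rename_natAdd (g : MvPolynomial (Fin q × ι) R) :
    restrictRight p q (rename (fun x => (Fin.natAdd p x.1, x.2)) g) = g := by
  induction g using MvPolynomial.induction_on <;> simp_all

end MvPolynomial

theorem span_qPoly_le_ker_restrictLeft (p q k : ℕ) :
    Ideal.span {h | ∃ (α : Fin p) (μ : Fin q), h = qPoly p q k α μ} ≤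
      RingHom.ker (restrictLeft p q) :=
  Ideal.span_le.2 <| by
    rintro _ ⟨α, μ, rfl⟩
    simp [qPoly]

theorem span_qPoly_le_ker_restrictRight (p q k : ℕ) :
    Ideal.span {h | ∃ (α : Fin p) (μ : Fin q), h = qPoly p q k α μ} ≤
      RingHom.ker (restrictRight p q) :=
  Ideal.span_le.2 <| by
    rintro _ ⟨α, μ, rfl⟩
    simp [qPoly]

theorem stmt3_general (p q k : ℕ)
    (f₀ : MvPolynomial (Fin p × Fin k) ℂ) (g₀ : MvPolynomial (Fin q × Fin k) ℂ)
    (f g : MvPolynomial (Fin (p + q) × Fin k) ℂ)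
    (hf : f = rename (fun x : Fin p × Fin k => (Fin.castAdd q x.1, x.2)) f₀)
    (hg : g = rename (fun x : Fin q × Fin k => (Fin.natAdd p x.1, x.2)) g₀)
    (hfg : f + g ∈ Ideal.span {h | ∃ (α : Fin p) (μ : Fin q), h = qPoly p q k α μ}) :
    (∃ c : ℂ, f = C c ∧ g = C (-c)) ∧
      ((constantCoeff f = 0 ∨ constantCoeff g = 0) → f = 0 ∧ g = 0) := by
  subst hf hg
  have hL : f₀ + C (constantCoeff g₀) = 0 := by
    simpa using span_qPoly_le_ker_restrictLeft p q k hfg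
  have hR : C (constantCoeff f₀) + g₀ = 0 := by
    simpa using span_qPoly_le_ker_restrictRight p q k hfg
  obtain ⟨c, rfl, rfl⟩ : ∃ c, f₀ = C c ∧ g₀ = C (-c) := by
    refine ⟨constantCoeff f₀, ?_, by rw [eq_neg_of_add_eq_zero_right hR, map_neg]⟩
    rw [eq_neg_of_add_eq_zero_left hL]
    simp
  refine ⟨⟨c, rename_C _ _, rename_C _ _⟩, ?_⟩
  rintro (h | h) <;> simp_all

/-- Let `p, q, k` be positive integers and `I ⊆ P_k` the ideal generated
by all the quadratics `q_{αμ}`.  Suppose `f` involves only the "positive" variables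
`z_{αi}` (`1 ≤ α ≤ p`), i.e. `f` is the image of some `f₀ ∈ ℂ[z_{αi}]` under the
inclusion of polynomial rings, and `g` involves only the "negative" variables `z_{μi}`
(`p+1 ≤ μ ≤ p+q`).  If `f + g ∈ I`, then `f` and `g` are constants with `f = −g`; in
particular, if `f` or `g` has zero constant term, then `f = 0` and `g = 0`. -/
theorem stmt3 (p q k : ℕ) (hp : 0 < p) (hq : 0 < q) (hk : 0 < k)
    (f₀ : MvPolynomial (Fin p × Fin k) ℂ) (g₀ : MvPolynomial (Fin q × Fin k) ℂ)
    (f g : MvPolynomial (Fin (p + q) × Fin k) ℂ)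
    (hf : f = rename (fun x : Fin p × Fin k => (Fin.castAdd q x.1, x.2)) f₀)
    (hg : g = rename (fun x : Fin q × Fin k => (Fin.natAdd p x.1, x.2)) g₀)
    (hfg : f + g ∈ Ideal.span {h | ∃ (α : Fin p) (μ : Fin q), h = qPoly p q k α μ}) :
    (∃ c : ℂ, f = C c ∧ g = C (-c)) ∧
      ((constantCoeff f = 0 ∨ constantCoeff g = 0) → f = 0 ∧ g = 0) :=
  stmt3_general p q k f₀ g₀ f g hf hg hfg
end

section
/- Let k ≥ 1 and let S_k = ℂ[r_{ij} (1 ≤ i ≤ j ≤ k), w₁, …, w_k] be the polynomial ring in k(k+1)/2 + k variables; for i > j write r_{ij} = r_{ji}. Define the cubic polynomials c_j = Σ_{i=1}^k r_{ij} w_i for 1 ≤ j ≤ k. Then (c₁, …, c_k) is a regular sequence in S_k. -/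
open MvPolynomial

/-- The variable `r_{ij}` of `S_k = ℂ[r_{ij} (1 ≤ i ≤ j ≤ k), w₁, …, w_k]`; the
`r`-variables are indexed by unordered pairs (`Sym2`), which encodes the convention
`r_{ij} = r_{ji}`. -/
noncomputable def rVar (k : ℕ) (i j : Fin k) :
    MvPolynomial (Sym2 (Fin k) ⊕ Fin k) ℂ :=
  X (Sum.inl s(i, j))

/-- The variable `w_i` of `S_k`. -/
noncomputable def wVar (k : ℕ) (i : Fin k) :
    MvPolynomial (Sym2 (Fin k) ⊕ Fin k) ℂ :=
  X (Sum.inr i)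

/-- The cubic polynomial `c_j = Σ_{i=1}^k r_{ij} w_i` in `S_k`. -/
noncomputable def cPoly (k : ℕ) (j : Fin k) :
    MvPolynomial (Sym2 (Fin k) ⊕ Fin k) ℂ :=
  ∑ i : Fin k, rVar k i j * wVar k i

/-!
All `S_k` are retracts of one polynomial ring `ℂ[r_{ij}, w_i : i, j ∈ ℕ]` (via `rename` and
`killCompl`), and regularity descends along retractions, so we work there and induct on `k`.
Going from `k` to `k + 1` adds `r_{kj} w_k` to `c_j`. Fix `j ≤ k`, put `w = w_k` and
`I = (c_0, …, c_{j-1})` (new `c`'s, indices from `0`).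
* `w` is regular modulo `I`: setting `w = 0` turns `f w ∈ I` into a syzygy of the old `c`'s,
  which form a regular sequence, so it is Koszul, and Koszul syzygies lift.
* Up to a power of `w`, every polynomial is congruent modulo `I` to one free of the `r_{km}`
  (`m < j`), and no nonzero such polynomial lies in `I` (substitute `r_{km} = -c_m^{old} / w`).
  With the previous point this makes `I` prime.
* The new `c_j` is not in `I`: for `j < k` it is free of the `r_{km}`, and
  `w c_k ≡ r_{kk} w² - ∑_{i<k} c_i^{old} w_i ≠ 0` modulo `I`.
-/

open Finset

section Koszul

variable {R : Type*} [CommRing R]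

def IsRegularUpTo (a : ℕ → R) (n : ℕ) : Prop :=
  ∀ i < n, ∀ f : R,
    f * a i ∈ Ideal.span (a '' Set.Iio i) → f ∈ Ideal.span (a '' Set.Iio i)

theorem IsRegularUpTo.mono {a : ℕ → R} {m n : ℕ} (ha : IsRegularUpTo a n) (hmn : m ≤ n) :
    IsRegularUpTo a m :=
  fun i hi => ha i (hi.trans_le hmn)

theorem mem_span_image_Iio_iff {a : ℕ → R} {n : ℕ} {x : R} :
    x ∈ Ideal.span (a '' Set.Iio n) ↔ ∃ t : ℕ → R, x = ∑ i ∈ range n, t i * a i := by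
  induction n generalizing x with
  | zero => simp
  | succ n ih =>
    rw [show Set.Iio (n + 1) = insert n (Set.Iio n) from Order.Iio_succ_eq_insert n,
      Set.image_insert_eq, Ideal.mem_span_insert]
    constructor
    · rintro ⟨c, z, hz, rfl⟩
      obtain ⟨t, rfl⟩ := ih.mp hz
      refine ⟨Function.update t n c, ?_⟩
      rw [sum_range_succ, Function.update_self, add_comm]
      congr 1
      exact sum_congr rfl fun i hi => by rw [Function.update_of_ne (mem_range.mp hi).ne]
    · rintro ⟨t, rfl⟩
      exact ⟨t n, _, ih.mpr ⟨t, rfl⟩, by rw [sum_range_succ, add_comm]⟩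

/-- Koszul: the syzygies of a regular sequence are generated by the trivial ones
`a m • e i - a i • e m`. -/
theorem IsRegularUpTo.exists_eq_sum_of_sum_mul_eq_zero {a : ℕ → R} {n : ℕ}
    (ha : IsRegularUpTo a n) {g : ℕ → R} (hg : ∑ i ∈ range n, g i * a i = 0) :
    ∃ h : ℕ → ℕ → R, ∀ i < n, g i = ∑ m ∈ range n, (h i m - h m i) * a m := by
  induction n generalizing g with
  | zero => exact ⟨0, by simp⟩
  | succ n ih =>
    rw [sum_range_succ] at hg
    have hgn : g n * a n ∈ Ideal.span (a '' Set.Iio n) :=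
      mem_span_image_Iio_iff.mpr ⟨-g, by
        simp only [Pi.neg_apply, neg_mul, sum_neg_distrib]
        linear_combination hg⟩
    -- Regularity of `a n` gives `g n = ∑ t m * a m`; subtracting the trivial syzygies
    -- `t m • (a n • e m - a m • e n)` leaves a syzygy of `a 0, …, a (n - 1)`.
    obtain ⟨t, ht⟩ := mem_span_image_Iio_iff.mp (ha n n.lt_succ_self _ hgn)
    obtain ⟨h, hh⟩ := ih (ha.mono n.le_succ) (g := fun i => g i + t i * a n) <| by
      simp only [add_mul, sum_add_distrib, mul_right_comm _ (a n), ← sum_mul, ← ht]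
      linear_combination hg
    let H : ℕ → ℕ → R := fun i m =>
      if i < n ∧ m < n then h i m else if m = n then -t i else 0
    refine ⟨H, fun i hi => ?_⟩
    rw [sum_range_succ]
    rcases Nat.lt_succ_iff_lt_or_eq.mp hi with hi | rfl
    · have hsum : ∀ m ∈ range n, (H i m - H m i) * a m = (h i m - h m i) * a m :=
        fun m hm => by simp [H, hi, mem_range.mp hm]
      rw [sum_congr rfl hsum, ← hh i hi]
      simp [H, hi.ne]
    · have hsum : ∀ m ∈ range i, (H i m - H m i) * a m = t m * a m :=
        fun m hm => by simp [H, (mem_range.mp hm).ne]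
      rw [sum_congr rfl hsum, ← ht]
      simp [H]

theorem sum_sum_sub_swap_mul_mul_eq_zero {ι : Type*} (s : Finset ι) (h : ι → ι → R)
    (x : ι → R) :
    ∑ i ∈ s, ∑ m ∈ s, (h i m - h m i) * x m * x i = 0 := by
  simp only [sub_mul, sum_sub_distrib]
  rw [sum_comm (f := fun i m => h m i * x m * x i), sub_eq_zero]
  exact sum_congr rfl fun i _ => sum_congr rfl fun m _ => mul_right_comm _ _ _

/-- Applying `ε` to `f * w = ∑ g i * c i` gives a syzygy of the `d`'s; it is Koszul, and a Koszul
syzygy of the `d`'s is one of the `c`'s up to multiples of `w`. -/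
theorem mem_span_of_mul_mem_span {w : R} (hw : w ∈ nonZeroDivisors R) (ε : R →+* R)
    (hεw : ε w = 0) (hε : ∀ x, w ∣ x - ε x) {d y : ℕ → R} {j : ℕ}
    (hd : IsRegularUpTo d j) (hεd : ∀ m < j, ε (d m) = d m) {f : R}
    (hf : f * w ∈ Ideal.span ((fun m => d m + y m * w) '' Set.Iio j)) :
    f ∈ Ideal.span ((fun m => d m + y m * w) '' Set.Iio j) := by
  set c : ℕ → R := fun m => d m + y m * w
  obtain ⟨g, hg⟩ := mem_span_image_Iio_iff.mp hf
  obtain ⟨h, hh⟩ := hd.exists_eq_sum_of_sum_mul_eq_zero (g := fun i => ε (g i)) <|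
    calc ∑ i ∈ range j, ε (g i) * d i = ∑ i ∈ range j, ε (g i) * ε (c i) :=
          sum_congr rfl fun i hi => by simp [c, hεw, hεd i (mem_range.mp hi)]
      _ = ε (f * w) := by simp only [hg, map_sum, map_mul]
      _ = 0 := by rw [map_mul, hεw, mul_zero]
  choose e he using fun i => hε (g i)
  have hterm : ∀ i < j, g i * c i = ∑ m ∈ range j, (h i m - h m i) * c m * c i
      - (∑ m ∈ range j, (h i m - h m i) * y m * c i) * w + e i * c i * w := by
    intro i hi
    have hgi : g i = ∑ m ∈ range j, (h i m - h m i) * (c m - y m * w) + w * e i := by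
      simp only [c, add_sub_cancel_right]
      rw [← hh i hi, ← he i]
      ring
    rw [hgi, add_mul, sum_mul, sum_mul, ← sum_sub_distrib]
    rw [sum_congr rfl fun m _ => (by ring : (h i m - h m i) * (c m - y m * w) * c i =
      (h i m - h m i) * c m * c i - (h i m - h m i) * y m * c i * w)]
    ring
  have key : f * w = (∑ i ∈ range j, e i * c i
      - ∑ i ∈ range j, ∑ m ∈ range j, (h i m - h m i) * y m * c i) * w := by
    rw [hg, sum_congr rfl fun i hi => hterm i (mem_range.mp hi), sum_add_distrib,
      sum_sub_distrib, sum_sum_sub_swap_mul_mul_eq_zero, ← sum_mul, ← sum_mul]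
    ring
  rw [mul_cancel_right_mem_nonZeroDivisors hw] at key
  rw [key]
  refine Ideal.sub_mem _ (Ideal.sum_mem _ fun i hi => ?_) (Ideal.sum_mem _ fun i hi =>
    Ideal.sum_mem _ fun m _ => ?_) <;>
  exact Ideal.mul_mem_left _ _ (Ideal.subset_span ⟨i, mem_range.mp hi, rfl⟩)

end Koszul

namespace MvPolynomial

variable {σ ι R : Type*} [CommRing R]

theorem X_dvd_sub_aeval_update_zero [DecidableEq σ] (v : σ) (p : MvPolynomial σ R) :
    X v ∣ p - aeval (Function.update X v 0) p := by
  induction p using MvPolynomial.induction_on with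
  | C a => simp
  | add p q hp hq => simpa [add_sub_add_comm] using dvd_add hp hq
  | mul_X p x hp =>
    rw [map_mul, aeval_X]
    by_cases hx : x = v
    · subst hx
      simp
    · rw [Function.update_of_ne hx, ← sub_mul]
      exact hp.mul_right _

theorem exists_pow_mul_sub_mem_span_of_mem_supported {y : ι → σ} {s : Set ι}
    {d : ι → MvPolynomial σ R} {w : MvPolynomial σ R} (hw : w ∈ supported R (y '' s)ᶜ)
    (hd : ∀ m ∈ s, d m ∈ supported R (y '' s)ᶜ) (f : MvPolynomial σ R) :
    ∃ N : ℕ, ∃ g ∈ supported R (y '' s)ᶜ,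
      w ^ N * f - g ∈ Ideal.span ((fun m => d m + X (y m) * w) '' s) := by
  set I := Ideal.span ((fun m => d m + X (y m) * w) '' s)
  induction f using MvPolynomial.induction_on with
  | C a => exact ⟨0, C a, Subalgebra.algebraMap_mem _ a, by simp⟩
  | add p q hp hq =>
    obtain ⟨N, g, hg, hpg⟩ := hp
    obtain ⟨M, h, hh, hqh⟩ := hq
    refine ⟨N + M, w ^ M * g + w ^ N * h, add_mem (mul_mem (pow_mem hw _) hg)
      (mul_mem (pow_mem hw _) hh), ?_⟩
    have := add_mem (I.mul_mem_left (w ^ M) hpg) (I.mul_mem_left (w ^ N) hqh)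
    convert this using 1
    ring
  | mul_X p x hp =>
    obtain ⟨N, g, hg, hpg⟩ := hp
    by_cases hx : x ∈ y '' s
    · obtain ⟨m, hm, rfl⟩ := hx
      refine ⟨N + 1, -(g * d m), neg_mem (mul_mem hg (hd m hm)), ?_⟩
      have := sub_mem (I.mul_mem_left (w ^ N * p) (Ideal.subset_span ⟨m, hm, rfl⟩))
        (I.mul_mem_right (d m) hpg)
      convert this using 1
      ring
    · refine ⟨N, g * X x, mul_mem hg (Algebra.subset_adjoin (Set.mem_image_of_mem X hx)), ?_⟩
      convert I.mul_mem_right (X x) hpg using 1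
      ring

/-- Substituting `X (y m) ↦ -d m / w` into the fraction field kills the ideal and is injective on
polynomials free of the `y`'s. -/
theorem eq_zero_of_mem_supported_of_mem_span [IsDomain R] {y : ι → σ} (hy : y.Injective)
    {s : Set ι} {d : ι → MvPolynomial σ R} {w : MvPolynomial σ R} (hw0 : w ≠ 0)
    (hw : w ∈ supported R (y '' s)ᶜ) (hd : ∀ m ∈ s, d m ∈ supported R (y '' s)ᶜ)
    {g : MvPolynomial σ R} (hg : g ∈ supported R (y '' s)ᶜ)
    (hgI : g ∈ Ideal.span ((fun m => d m + X (y m) * w) '' s)) : g = 0 := by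
  classical
  set toK := algebraMap (MvPolynomial σ R) (FractionRing (MvPolynomial σ R))
  set Φ := eval₂Hom (toK.comp C) (Function.extend y
    (fun m => if m ∈ s then -toK (d m) / toK w else toK (X (y m))) (fun x => toK (X x)))
  have hfix : ∀ p ∈ supported R (y '' s)ᶜ, Φ p = toK p := by
    intro p hp
    refine hom_congr_vars (eval₂Hom_comp_C _ _) (fun x hx _ => ?_) rfl
    have hx : x ∉ y '' s := mem_supported.mp hp hx
    rw [eval₂Hom_X']
    by_cases hxy : ∃ m, y m = x
    · obtain ⟨m, rfl⟩ := hxy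
      rw [hy.extend_apply, if_neg fun hm => hx ⟨m, hm, rfl⟩]
    · exact Function.extend_apply' _ _ _ hxy
  have hker : Ideal.span ((fun m => d m + X (y m) * w) '' s) ≤ RingHom.ker Φ := by
    refine Ideal.span_le.mpr ?_
    rintro _ ⟨m, hm, rfl⟩
    have hw' : toK w ≠ 0 := (map_ne_zero_iff _ (IsFractionRing.injective _ _)).mpr hw0
    simp only [SetLike.mem_coe, RingHom.mem_ker, map_add, map_mul, hfix _ (hd m hm),
      hfix _ hw, Φ, eval₂Hom_X', hy.extend_apply, if_pos hm]
    field_simp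
    ring
  have : toK g = 0 := hfix g hg ▸ hker hgI
  exact (map_eq_zero_iff _ (IsFractionRing.injective _ _)).mp this

theorem isPrime_span_of_mul_mem [IsDomain R] {y : ι → σ} (hy : y.Injective) {s : Set ι}
    {d : ι → MvPolynomial σ R} {w : MvPolynomial σ R} (hw0 : w ≠ 0)
    (hw : w ∈ supported R (y '' s)ᶜ) (hd : ∀ m ∈ s, d m ∈ supported R (y '' s)ᶜ)
    (hreg : ∀ f, f * w ∈ Ideal.span ((fun m => d m + X (y m) * w) '' s) →
      f ∈ Ideal.span ((fun m => d m + X (y m) * w) '' s)) :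
    (Ideal.span ((fun m => d m + X (y m) * w) '' s)).IsPrime := by
  set I := Ideal.span ((fun m => d m + X (y m) * w) '' s)
  have hregN : ∀ N f, w ^ N * f ∈ I → f ∈ I := by
    intro N
    induction N with
    | zero => simp
    | succ N ih => exact fun f hf => ih f (hreg _ (by rwa [mul_right_comm, ← pow_succ]))
  refine ⟨fun htop => one_ne_zero (eq_zero_of_mem_supported_of_mem_span hy hw0 hw hd
    (one_mem _) ((Ideal.eq_top_iff_one I).mp htop)), fun {a b} hab => ?_⟩
  obtain ⟨N, g, hg, hag⟩ := exists_pow_mul_sub_mem_span_of_mem_supported hw hd a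
  obtain ⟨M, h, hh, hbh⟩ := exists_pow_mul_sub_mem_span_of_mem_supported hw hd b
  have hgh : g * h ∈ I := by
    have := sub_mem (I.mul_mem_left (w ^ N * w ^ M) hab)
      (add_mem (I.mul_mem_right (w ^ M * b) hag) (I.mul_mem_left g hbh))
    convert this using 1
    ring
  rcases mul_eq_zero.mp (eq_zero_of_mem_supported_of_mem_span hy hw0 hw hd (mul_mem hg hh) hgh)
    with rfl | rfl
  · exact Or.inl (hregN N a (by simpa using hag))
  · exact Or.inr (hregN M b (by simpa using hbh))

end MvPolynomial

section Sequence

variable {R : Type*} [CommRing R]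

namespace RingTheory.Sequence

theorem isWeaklyRegular_iff_mul_mem (rs : List R) :
    IsWeaklyRegular R rs ↔ ∀ i (h : i < rs.length) (x : R),
      rs[i] * x ∈ Ideal.ofList (rs.take i) → x ∈ Ideal.ofList (rs.take i) := by
  have hsmul : ∀ I : Ideal R, (I • ⊤ : Submodule R R) = I := fun I => by
    rw [smul_eq_mul, Ideal.mul_top]
  rw [isWeaklyRegular_iff]
  exact forall₂_congr fun i h => by
    rw [hsmul]
    exact isSMulRegular_quotient_iff_mem_of_smul_mem _ _

theorem IsRegular.of_map_of_leftInverse {S : Type*} [CommRing S] {φ : R →+* S} {ψ : S →+* R}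
    (hψ : Function.LeftInverse ψ φ) {rs : List R} (h : IsRegular S (rs.map φ)) :
    IsRegular R rs := by
  have hmap : ∀ l : List R, (Ideal.ofList (l.map φ)).map ψ = Ideal.ofList l := fun l => by
    rw [Ideal.map_ofList, List.map_map, hψ.comp_eq_id, List.map_id]
  refine ⟨(isWeaklyRegular_iff_mul_mem rs).mpr fun i hi x hx => ?_, fun htop => ?_⟩
  · have hx' : (rs.map φ)[i]'(by simpa using hi) * φ x ∈
        Ideal.ofList ((rs.map φ).take i) := by
      simpa [Ideal.map_ofList, List.map_take] using Ideal.mem_map_of_mem φ hx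
    have := (isWeaklyRegular_iff_mul_mem _).mp h.toIsWeaklyRegular i _ (φ x) hx'
    rw [← hψ x, ← hmap, List.map_take]
    exact Ideal.mem_map_of_mem ψ this
  · refine h.top_ne_smul ?_
    simp only [smul_eq_mul, Ideal.mul_top] at htop ⊢
    rw [← Ideal.map_ofList, ← htop, Ideal.map_top]

end RingTheory.Sequence

open RingTheory.Sequence in
theorem IsRegularUpTo.isWeaklyRegular {a : ℕ → R} {n : ℕ} (ha : IsRegularUpTo a n) :
    IsWeaklyRegular R ((List.range n).map a) := by
  refine (isWeaklyRegular_iff_mul_mem _).mpr fun i hi x hx => ?_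
  have hi : i < n := by simpa using hi
  have hspan : Ideal.ofList (((List.range n).map a).take i) = Ideal.span (a '' Set.Iio i) := by
    rw [← List.map_take, List.take_range, min_eq_left hi.le]
    show Ideal.span _ = _
    congr 1
    ext
    simp
  simp only [hspan, List.getElem_map, List.getElem_range] at hx ⊢
  exact ha i hi x (mul_comm x (a i) ▸ hx)

end Sequence

section Cubic

variable {R : Type*} [CommRing R]

variable (R) in
/-- `c_j` of `S_k` for all `k` at once, with indices starting at `0`. -/
noncomputable def cubicSeq (k j : ℕ) : MvPolynomial (Sym2 ℕ ⊕ ℕ) R :=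
  ∑ i ∈ range k, X (Sum.inl s(i, j)) * X (Sum.inr i)

theorem cubicSeq_succ (k : ℕ) :
    cubicSeq R (k + 1) = fun j => cubicSeq R k j + X (Sum.inl s(k, j)) * X (Sum.inr k) :=
  funext fun _ => sum_range_succ _ _

theorem inl_mk_injective (k : ℕ) :
    (fun m : ℕ => (Sum.inl s(k, m) : Sym2 ℕ ⊕ ℕ)).Injective :=
  fun _ _ h => Sym2.congr_right.mp (Sum.inl_injective h)

theorem inl_mem_image_inl_iff {k j a b : ℕ} :
    (Sum.inl s(a, b) : Sym2 ℕ ⊕ ℕ) ∈ (fun m => Sum.inl s(k, m)) '' Set.Iio j ↔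
      a = k ∧ b < j ∨ b = k ∧ a < j := by
  simp only [Set.mem_image, Set.mem_Iio, Sum.inl.injEq, Sym2.eq_iff]
  constructor
  · rintro ⟨m, hm, ⟨rfl, rfl⟩ | ⟨rfl, rfl⟩⟩ <;> simp [hm]
  · rintro (⟨rfl, hb⟩ | ⟨rfl, ha⟩)
    · exact ⟨b, hb, Or.inl ⟨rfl, rfl⟩⟩
    · exact ⟨a, ha, Or.inr ⟨rfl, rfl⟩⟩

theorem X_inr_mem_supported (k j n : ℕ) :
    (X (Sum.inr n) : MvPolynomial (Sym2 ℕ ⊕ ℕ) R) ∈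
      supported R ((fun m => Sum.inl s(k, m)) '' Set.Iio j)ᶜ :=
  Algebra.subset_adjoin ⟨_, by simp, rfl⟩

theorem cubicSeq_mem_supported {n m k j : ℕ} (hm : m ≠ k) (h : n ≤ k ∨ j ≤ m) :
    cubicSeq R n m ∈ supported R ((fun m => Sum.inl s(k, m)) '' Set.Iio j)ᶜ := by
  refine Subalgebra.sum_mem _ fun i hi =>
    mul_mem (Algebra.subset_adjoin ⟨_, ?_, rfl⟩) (X_inr_mem_supported k j i)
  rw [Set.mem_compl_iff, inl_mem_image_inl_iff]
  have := mem_range.mp hi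
  omega

theorem aeval_update_zero_cubicSeq {k m : ℕ} :
    aeval (Function.update X (Sum.inr k) 0) (cubicSeq R k m) = cubicSeq R k m := by
  refine (map_sum _ _ _).trans (sum_congr rfl fun i hi => ?_)
  simp [Function.update_of_ne, (mem_range.mp hi).ne]

theorem X_inr_mul_cubicSeq_succ_self_sub_mem_span (k : ℕ) :
    X (Sum.inr k) * cubicSeq R (k + 1) k - (X (Sum.inl s(k, k)) * X (Sum.inr k) ^ 2 -
      ∑ i ∈ range k, cubicSeq R k i * X (Sum.inr i)) ∈
      Ideal.span
        ((fun m => cubicSeq R k m + X (Sum.inl s(k, m)) * X (Sum.inr k)) '' Set.Iio k) := by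
  have hswap : (X (Sum.inr k) : MvPolynomial (Sym2 ℕ ⊕ ℕ) R) *
      ∑ i ∈ range k, X (Sum.inl s(i, k)) * X (Sum.inr i) =
      ∑ i ∈ range k, X (Sum.inl s(k, i)) * X (Sum.inr k) * X (Sum.inr i) :=
    (mul_sum _ _ _).trans <| sum_congr rfl fun i _ => by rw [Sym2.eq_swap]; ring
  have hsplit : ∑ i ∈ range k, (cubicSeq R k i + X (Sum.inl s(k, i)) * X (Sum.inr k)) *
      X (Sum.inr i) = ∑ i ∈ range k, cubicSeq R k i * X (Sum.inr i) +
      ∑ i ∈ range k, X (Sum.inl s(k, i)) * X (Sum.inr k) * X (Sum.inr i) :=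
    (sum_congr rfl fun _ _ => add_mul _ _ _).trans sum_add_distrib
  have hsum : X (Sum.inr k) * cubicSeq R (k + 1) k - (X (Sum.inl s(k, k)) * X (Sum.inr k) ^ 2 -
      ∑ i ∈ range k, cubicSeq R k i * X (Sum.inr i)) = ∑ i ∈ range k,
      (cubicSeq R k i + X (Sum.inl s(k, i)) * X (Sum.inr k)) * X (Sum.inr i) := by
    rw [cubicSeq, sum_range_succ]
    linear_combination hswap - hsplit
  rw [hsum]
  exact Ideal.sum_mem _ fun i hi =>
    Ideal.mul_mem_right _ _ (Ideal.subset_span ⟨i, mem_range.mp hi, rfl⟩)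

theorem cubicSeq_succ_notMem_span [IsDomain R] {k j : ℕ} (hj : j ≤ k) :
    cubicSeq R (k + 1) j ∉ Ideal.span ((fun m => cubicSeq R k m +
      X (Sum.inl s(k, m)) * X (Sum.inr k)) '' Set.Iio j) := by
  intro hmem
  have hd : ∀ m ∈ Set.Iio j, cubicSeq R k m ∈
      supported R ((fun m => Sum.inl s(k, m)) '' Set.Iio j)ᶜ :=
    fun m hm => cubicSeq_mem_supported (by simp at hm; omega) (Or.inl le_rfl)
  have eq_zero : ∀ g ∈ supported R ((fun m => Sum.inl s(k, m)) '' Set.Iio j)ᶜ,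
      g ∈ Ideal.span ((fun m => cubicSeq R k m + X (Sum.inl s(k, m)) * X (Sum.inr k)) ''
        Set.Iio j) → g = 0 := fun _ =>
    eq_zero_of_mem_supported_of_mem_span (inl_mk_injective k) (X_ne_zero _)
      (X_inr_mem_supported k j k) hd
  have eval_eq_zero : ∀ p : MvPolynomial (Sym2 ℕ ⊕ ℕ) R, p = 0 →
      eval (fun x => if x = Sum.inl s(k, j) ∨ x = Sum.inr k then 1 else 0) p = 0 := by
    rintro _ rfl
    exact map_zero _
  rcases hj.lt_or_eq with hj | rfl
  · have := eq_zero _ (cubicSeq_mem_supported hj.ne (Or.inr le_rfl)) hmem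
    simpa [cubicSeq, sum_range_succ] using eval_eq_zero _ this
  · have hg : X (Sum.inl s(j, j)) * X (Sum.inr j) ^ 2 -
        ∑ i ∈ range j, cubicSeq R j i * X (Sum.inr i) ∈
        supported R ((fun m => Sum.inl s(j, m)) '' Set.Iio j)ᶜ :=
      sub_mem (mul_mem (Algebra.subset_adjoin ⟨_, by simp, rfl⟩)
        (pow_mem (X_inr_mem_supported j j j) 2)) (Subalgebra.sum_mem _ fun i hi =>
          mul_mem (cubicSeq_mem_supported (mem_range.mp hi).ne (Or.inl le_rfl))
            (X_inr_mem_supported j j i))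
    have := eq_zero _ hg <| by
      simpa only [sub_sub_cancel] using sub_mem (Ideal.mul_mem_left _ (X (Sum.inr j)) hmem)
        (X_inr_mul_cubicSeq_succ_self_sub_mem_span j)
    simpa using eval_eq_zero _ this

theorem isRegularUpTo_cubicSeq [IsDomain R] (k : ℕ) : IsRegularUpTo (cubicSeq R k) k := by
  induction k with
  | zero => exact fun i hi => absurd hi i.not_lt_zero
  | succ k ih =>
    intro j hj f hf
    set I := Ideal.span
      ((fun m => cubicSeq R k m + X (Sum.inl s(k, m)) * X (Sum.inr k)) '' Set.Iio j)
    have hI : Ideal.span (cubicSeq R (k + 1) '' Set.Iio j) = I := by rw [cubicSeq_succ]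
    rw [hI] at hf ⊢
    have hreg : ∀ g, g * X (Sum.inr k) ∈ I → g ∈ I := fun g hg =>
      mem_span_of_mul_mem_span (mem_nonZeroDivisors_of_ne_zero (X_ne_zero _))
        (aeval (R := R) (Function.update X (Sum.inr k) 0)).toRingHom (by simp)
        (X_dvd_sub_aeval_update_zero (Sum.inr k)) (ih.mono (by omega))
        (fun _ _ => aeval_update_zero_cubicSeq) hg
    have hprime : I.IsPrime := isPrime_span_of_mul_mem (inl_mk_injective k) (X_ne_zero _)
      (X_inr_mem_supported k j k)
      (fun m hm => cubicSeq_mem_supported (by simp at hm; omega) (Or.inl le_rfl)) hreg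
    exact (hprime.mem_or_mem hf).resolve_right (cubicSeq_succ_notMem_span (by omega))

theorem isRegular_cubicSeq [IsDomain R] (k : ℕ) :
    RingTheory.Sequence.IsRegular (MvPolynomial (Sym2 ℕ ⊕ ℕ) R)
      ((List.range k).map (cubicSeq R k)) := by
  refine ⟨(isRegularUpTo_cubicSeq k).isWeaklyRegular, fun htop => ?_⟩
  rw [smul_eq_mul, Ideal.mul_top] at htop
  have hle : Ideal.ofList ((List.range k).map (cubicSeq R k)) ≤ RingHom.ker (eval 0) :=
    Ideal.span_le.mpr fun _ hx => by
      obtain ⟨j, -, rfl⟩ := List.mem_map.mp hx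
      simp [cubicSeq]
  simpa using hle (htop ▸ Submodule.mem_top : (1 : MvPolynomial (Sym2 ℕ ⊕ ℕ) R) ∈ _)

end Cubic

theorem rename_cPoly (k : ℕ) (j : Fin k) :
    rename (Sum.map (Sym2.map Fin.val) Fin.val) (cPoly k j) = cubicSeq ℂ k j := by
  simp [cPoly, rVar, wVar, cubicSeq,
    ← Fin.sum_univ_eq_sum_range (fun i => X (Sum.inl s(i, (j : ℕ))) * X (Sum.inr i))]

theorem stmt4_general (k : ℕ) :
    RingTheory.Sequence.IsRegular (MvPolynomial (Sym2 (Fin k) ⊕ Fin k) ℂ)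
      (List.ofFn fun j : Fin k => cPoly k j) := by
  have he : (Sum.map (Sym2.map Fin.val) Fin.val :
      Sym2 (Fin k) ⊕ Fin k → Sym2 ℕ ⊕ ℕ).Injective :=
    (Sym2.map.injective Fin.val_injective).sumMap Fin.val_injective
  have hlist : (List.ofFn fun j : Fin k => cPoly k j).map (rename (R := ℂ) _).toRingHom =
      (List.range k).map (cubicSeq ℂ k) :=
    List.ext_getElem (by simp) fun j _ _ => by simpa using rename_cPoly k ⟨j, by simp_all⟩
  refine RingTheory.Sequence.IsRegular.of_map_of_leftInverse (ψ := (killCompl he).toRingHom)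
    (fun p => killCompl_rename_app he p) ?_
  rw [hlist]
  exact isRegular_cubicSeq k

/-- Let `k ≥ 1` and let `S_k = ℂ[r_{ij} (1 ≤ i ≤ j ≤ k), w₁, …, w_k]`,
with the convention `r_{ij} = r_{ji}` for `i > j`, and let `c_j = Σ_{i=1}^k r_{ij} w_i`.
Then `(c₁, …, c_k)` is a regular sequence in `S_k`. -/
theorem stmt4 (k : ℕ) (hk : 1 ≤ k) :
    RingTheory.Sequence.IsRegular (MvPolynomial (Sym2 (Fin k) ⊕ Fin k) ℂ)
      (List.ofFn fun j : Fin k => cPoly k j) :=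
  stmt4_general k
end

section
/- Let k ≥ 1, S_k = ℂ[r_{ij} (1 ≤ i ≤ j ≤ k), w₁, …, w_k] with r_{ij} = r_{ji} for i > j, and c_j = Σ_{i=1}^k r_{ij} w_i for 1 ≤ j ≤ k. If f ∈ ℂ[w₁, …, w_k] (regarded as a subring of S_k) lies in the ideal (c₁, …, c_k) of S_k, then f = 0. Consequently the composite ℂ[w₁,…,w_k] → S_k → S_k/(c₁,…,c_k) is injective. -/
open MvPolynomial

/-- The inclusion `ℂ[w₁,…,w_k] → S_k`. -/
noncomputable def wIncl (k : ℕ) :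
    MvPolynomial (Fin k) ℂ →ₐ[ℂ] MvPolynomial (Sym2 (Fin k) ⊕ Fin k) ℂ :=
  rename Sum.inr

/-! Setting every `r`-variable to zero is a ring retraction `S_k → ℂ[w]` of the inclusion which
kills each `c_j`; it therefore factors through `S_k/(c₁,…,c_k)` and gives a left inverse of
`ℂ[w] → S_k/(c₁,…,c_k)`. -/

theorem Ideal.injective_quotientMk_comp_of_leftInverse {A B : Type*} [CommRing A] [CommRing B]
    {φ : A →+* B} {ψ : B →+* A} (h : Function.LeftInverse ψ φ) {I : Ideal B}
    (hI : I ≤ RingHom.ker ψ) : Function.Injective (Ideal.Quotient.mk I ∘ φ) :=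
  Function.LeftInverse.injective (g := Ideal.Quotient.lift I ψ hI) fun a =>
    (Ideal.Quotient.lift_mk I ψ hI).trans (h a)

namespace MvPolynomial

variable {R σ τ : Type*} [CommSemiring R]

noncomputable def evalInlZero : MvPolynomial (σ ⊕ τ) R →ₐ[R] MvPolynomial τ R :=
  aeval (Sum.elim 0 X)

theorem evalInlZero_X_inl (s : σ) : evalInlZero (X (Sum.inl s) : MvPolynomial (σ ⊕ τ) R) = 0 := by
  simp [evalInlZero]

theorem evalInlZero_rename_inr (p : MvPolynomial τ R) :
    evalInlZero (rename (Sum.inr : τ → σ ⊕ τ) p) = p := by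
  rw [evalInlZero, aeval_rename, Sum.elim_comp_inr, aeval_X_left_apply]

end MvPolynomial

theorem span_cPoly_le_ker_evalInlZero (k : ℕ) :
    Ideal.span (Set.range fun j : Fin k => cPoly k j) ≤ RingHom.ker (evalInlZero : _ →ₐ[ℂ] _) := by
  rw [Ideal.span_le]
  rintro _ ⟨j, rfl⟩
  simp only [SetLike.mem_coe, RingHom.mem_ker, cPoly, rVar, map_sum, map_mul, evalInlZero_X_inl,
    zero_mul, Finset.sum_const_zero]

theorem stmt6_general (k : ℕ) :
    (∀ f : MvPolynomial (Fin k) ℂ,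
      wIncl k f ∈ Ideal.span (Set.range fun j : Fin k => cPoly k j) → wIncl k f = 0) ∧
    Function.Injective fun f : MvPolynomial (Fin k) ℂ =>
      Ideal.Quotient.mk (Ideal.span (Set.range fun j : Fin k => cPoly k j)) (wIncl k f) := by
  have hinj := Ideal.injective_quotientMk_comp_of_leftInverse
    (φ := (wIncl k).toRingHom) (ψ := evalInlZero.toRingHom) evalInlZero_rename_inr
    (span_cPoly_le_ker_evalInlZero k)
  refine ⟨fun f hf => ?_, hinj⟩
  have hf0 : f = 0 := hinj <| by
    simpa [Ideal.Quotient.eq_zero_iff_mem] using hf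
  rw [hf0, map_zero]

/-- Let `k ≥ 1`.  If `f ∈ ℂ[w₁, …, w_k]` (regarded as a subring of
`S_k`) lies in the ideal `(c₁, …, c_k)` of `S_k`, then `f = 0`.  Consequently the
composite `ℂ[w₁,…,w_k] → S_k → S_k/(c₁,…,c_k)` is injective. -/
theorem stmt6 (k : ℕ) (hk : 1 ≤ k) :
    (∀ f : MvPolynomial (Fin k) ℂ,
      wIncl k f ∈ Ideal.span (Set.range fun j : Fin k => cPoly k j) → wIncl k f = 0) ∧
    Function.Injective fun f : MvPolynomial (Fin k) ℂ =>
      Ideal.Quotient.mk (Ideal.span (Set.range fun j : Fin k => cPoly k j)) (wIncl k f) :=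
  stmt6_general k
end

section
/- Let n, k, ℓ be positive integers with ℓ ≤ min(n, k), and let P = ℂ[z_{αi} : 1 ≤ α ≤ n, 1 ≤ i ≤ k]. For strictly increasing tuples I = (i₁ < ⋯ < i_ℓ) in {1,…,n} and J = (j₁ < ⋯ < j_ℓ) in {1,…,k}, let f_{I,J} ∈ P be the determinant of the ℓ×ℓ matrix (z_{i_a, j_b})_{1 ≤ a,b ≤ ℓ}. Then f_{I,J} is harmonic: for all 1 ≤ i, j ≤ k, Σ_{α=1}^n ∂²f_{I,J} / ∂z_{αi} ∂z_{αj} = 0. -/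
/-!
Every term `sign τ • ∏ b, z_{I (τ b), J b}` of the Leibniz expansion of the minor takes exactly
one factor from each row `I a` of `Z`, and these rows are distinct. So each monomial has degree
at most one in the variables `z_{α·}` of a fixed row `α`, and `∂_{αi} ∂_{αj}` kills it.
-/

open MvPolynomial

/-- The minor `f_{I,J}`: the determinant of the `ℓ×ℓ` submatrix of the generic `n×k`
matrix `Z = (z_{αi})` with rows `I` and columns `J`, as a polynomial in
`P = ℂ[z_{αi} : 1 ≤ α ≤ n, 1 ≤ i ≤ k]`. -/
noncomputable def minorPoly (n k ℓ : ℕ) (I : Fin ℓ → Fin n) (J : Fin ℓ → Fin k) :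
    MvPolynomial (Fin n × Fin k) ℂ :=
  Matrix.det (Matrix.of fun a b : Fin ℓ => (X (I a, J b) : MvPolynomial (Fin n × Fin k) ℂ))

theorem Derivation.leibniz_prod {ι R A M : Type*} [CommSemiring R] [CommSemiring A]
    [AddCommMonoid M] [Algebra R A] [Module A M] [Module R M] [DecidableEq ι]
    (D : Derivation R A M) (s : Finset ι) (f : ι → A) :
    D (∏ a ∈ s, f a) = ∑ a ∈ s, (∏ b ∈ s.erase a, f b) • D (f a) := by
  induction s using Finset.induction_on with
  | empty => simp
  | @insert a s ha ih =>
    rw [Finset.prod_insert ha, D.leibniz, ih, Finset.sum_insert ha, Finset.erase_insert ha,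
      Finset.smul_sum, add_comm]
    congr 1
    refine Finset.sum_congr rfl fun b hb => ?_
    rw [Finset.erase_insert_of_ne (ne_of_mem_of_not_mem hb ha).symm,
      Finset.prod_insert fun h => ha (Finset.mem_of_mem_erase h), mul_smul]

namespace MvPolynomial

variable {R σ ι : Type*}

theorem pderiv_prod_X_of_forall_ne [CommSemiring R] {v : σ} (s : Finset ι) (g : ι → σ)
    (hv : ∀ a ∈ s, g a ≠ v) :
    pderiv v (∏ a ∈ s, (X (g a) : MvPolynomial σ R)) = 0 := by
  classical
  rw [Derivation.leibniz_prod]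
  exact Finset.sum_eq_zero fun a ha => by rw [pderiv_X_of_ne (hv a ha), smul_zero]

theorem pderiv_pderiv_prod_X_eq_zero [CommSemiring R] {v w : σ} (s : Finset ι) (g : ι → σ)
    (hvw : ∀ a ∈ s, ∀ b ∈ s, g a = w → g b = v → a = b) :
    pderiv v (pderiv w (∏ a ∈ s, (X (g a) : MvPolynomial σ R))) = 0 := by
  classical
  rw [Derivation.leibniz_prod, map_sum]
  refine Finset.sum_eq_zero fun a ha => ?_
  by_cases hw : g a = w
  · rw [hw, pderiv_X_self, smul_eq_mul, mul_one]
    refine pderiv_prod_X_of_forall_ne _ _ fun b hb hv => ?_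
    exact (Finset.ne_of_mem_erase hb) (hvw a ha b (Finset.mem_of_mem_erase hb) hw hv).symm
  · rw [pderiv_X_of_ne hw, smul_zero, map_zero]

theorem pderiv_pderiv_det_X_eq_zero [CommRing R] {m : Type*} [Fintype m] [DecidableEq m]
    {v w : σ} (g : m → m → σ)
    (hvw : ∀ r c r' c', g r c = w → g r' c' = v → r = r') :
    pderiv v (pderiv w (Matrix.of fun r c => (X (g r c) : MvPolynomial σ R)).det) = 0 := by
  rw [Matrix.det_apply, map_sum, map_sum]
  refine Finset.sum_eq_zero fun τ _ => ?_
  rw [Units.smul_def, map_zsmul, map_zsmul]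
  simp only [Matrix.of_apply]
  rw [pderiv_pderiv_prod_X_eq_zero _ _ fun a _ b _ ha hb => τ.injective (hvw _ _ _ _ ha hb),
    smul_zero]

end MvPolynomial

theorem stmt7_general (n k ℓ : ℕ)
    (I : Fin ℓ → Fin n) (hI : StrictMono I) (J : Fin ℓ → Fin k)
    (i j : Fin k) :
    ∑ α : Fin n, pderiv (α, i) (pderiv (α, j) (minorPoly n k ℓ I J)) = 0 :=
  Finset.sum_eq_zero fun _ _ => pderiv_pderiv_det_X_eq_zero (fun r c => (I r, J c))
    fun _ _ _ _ hw hv => hI.injective ((congrArg Prod.fst hw).trans (congrArg Prod.fst hv).symm)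

/-- Let `n, k, ℓ` be positive integers with `ℓ ≤ min(n,k)`.  For strictly
increasing tuples `I` in `{1,…,n}` and `J` in `{1,…,k}` of length `ℓ`, the minor
`f_{I,J}` is harmonic: for all `1 ≤ i, j ≤ k`,
`Σ_{α=1}^n ∂²f_{I,J} / ∂z_{αi} ∂z_{αj} = 0`. -/
theorem stmt7 (n k ℓ : ℕ) (hn : 0 < n) (hk : 0 < k) (hℓ : 0 < ℓ)
    (hℓn : ℓ ≤ n) (hℓk : ℓ ≤ k)
    (I : Fin ℓ → Fin n) (hI : StrictMono I) (J : Fin ℓ → Fin k) (hJ : StrictMono J)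
    (i j : Fin k) :
    ∑ α : Fin n, pderiv (α, i) (pderiv (α, j) (minorPoly n k ℓ I J)) = 0 :=
  stmt7_general n k ℓ I hI J i j
end
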